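/- arXiv:2005.06617 — 10 statements merged into one kernel-verified Lean document; each statement's English description precedes it below -/
import Mathlib

section
/- Let c(p) = 1/s(p) + 1 - (1-p)^{s(p)} where s(p) = ⌈1/√p⌉. Then c(p)/(2√p) → 1 as p → 0⁺; that is, the per-item cost of Dorfman's algorithm with group size ⌈1/√p⌉ is asymptotically 2√p as the prevalence p tends to 0. -/
/-!
Substitute `t = √p` and write `s = ⌈1/t⌉`, so that `s t → 1`. The group-test term `1/s` is then
`~ t`. Since `s p = (s t) t → 0`, Bernoulli's inequality and `1 - x ≤ e^{-x}` give
`1 - (1 - p)^s = s p + O((s p)²) ~ s p ~ t`, so the cost is `~ 2t`.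
-/

open Filter Topology Asymptotics Real

lemma exp_neg_le_one_sub_add_sq {x : ℝ} (hx : 0 ≤ x) : exp (-x) ≤ 1 - x + x ^ 2 := by
  have h := add_one_le_exp x
  rw [exp_neg, inv_le_iff_one_le_mul₀ (exp_pos x)]
  nlinarith [mul_nonneg hx (sq_nonneg x)]

lemma abs_one_sub_one_sub_pow_sub_le {p : ℝ} (hp₀ : 0 ≤ p) (hp₁ : p ≤ 1) (n : ℕ) :
    |1 - (1 - p) ^ n - n * p| ≤ (n * p) ^ 2 := by
  have bernoulli : 1 - n * p ≤ (1 - p) ^ n := by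
    simpa [sub_eq_add_neg] using one_add_mul_le_pow (a := -p) (by linarith) n
  have hexp : (1 - p) ^ n ≤ 1 - n * p + (n * p) ^ 2 :=
    calc (1 - p) ^ n ≤ exp (-p) ^ n := pow_le_pow_left₀ (by linarith) (one_sub_le_exp_neg p) n
      _ = exp (-(n * p)) := by rw [← exp_nat_mul]; ring_nf
      _ ≤ 1 - n * p + (n * p) ^ 2 := exp_neg_le_one_sub_add_sq (by positivity)
  rw [abs_le]
  constructor <;> nlinarith [sq_nonneg ((n : ℝ) * p)]

theorem isEquivalent_one_sub_one_sub_pow {α : Type*} {l : Filter α} {p : α → ℝ} {n : α → ℕ}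
    (hp : ∀ᶠ x in l, p x ∈ Set.Icc 0 1) (hnp : Tendsto (fun x => n x * p x) l (𝓝 0)) :
    (fun x => 1 - (1 - p x) ^ n x) ~[l] fun x => n x * p x := by
  have hsq : (fun x => (n x * p x) ^ 2) =o[l] fun x => n x * p x :=
    (isLittleO_pow_id one_lt_two).comp_tendsto hnp
  refine IsBigO.trans_isLittleO (IsBigO.of_bound 1 ?_) hsq
  filter_upwards [hp] with x hx
  rw [Pi.sub_apply, one_mul, norm_eq_abs, norm_eq_abs, abs_of_nonneg (sq_nonneg ((n x : ℝ) * p x))]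
  exact abs_one_sub_one_sub_pow_sub_le hx.1 hx.2 (n x)

theorem tendsto_natCeil_one_div_mul :
    Tendsto (fun t : ℝ => (⌈1 / t⌉₊ : ℝ) * t) (𝓝[>] 0) (𝓝 1) := by
  have hup : Tendsto (fun t : ℝ => 1 + t) (𝓝[>] 0) (𝓝 1) :=
    tendsto_nhdsWithin_of_tendsto_nhds ((continuous_const.add continuous_id).tendsto' 0 1 (add_zero 1))
  refine tendsto_of_tendsto_of_tendsto_of_le_of_le' tendsto_const_nhds hup ?_ ?_ <;>
    filter_upwards [self_mem_nhdsWithin] with t (ht : 0 < t)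
  · calc (1 : ℝ) = 1 / t * t := by field_simp
      _ ≤ _ := by gcongr; exact Nat.le_ceil _
  · calc (⌈1 / t⌉₊ : ℝ) * t ≤ (1 / t + 1) * t := by
          gcongr; exact (Nat.ceil_lt_add_one (by positivity)).le
      _ = 1 + t := by field_simp

noncomputable def dorfmanCost (p : ℝ) (s : ℕ) : ℝ := 1 / s + 1 - (1 - p) ^ s

theorem tendsto_dorfmanCost_sq_div :
    Tendsto (fun t : ℝ => dorfmanCost (t ^ 2) ⌈1 / t⌉₊ / (2 * t)) (𝓝[>] 0) (𝓝 1) := by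
  have hst := tendsto_natCeil_one_div_mul
  have hunit : ∀ᶠ t in 𝓝[>] (0 : ℝ), t ∈ Set.Ioo 0 1 := Ioo_mem_nhdsGT one_pos
  have hsp : Tendsto (fun t : ℝ => (⌈1 / t⌉₊ : ℝ) * t ^ 2) (𝓝[>] 0) (𝓝 0) := by
    simpa [sq, mul_assoc] using hst.mul (tendsto_nhdsWithin_of_tendsto_nhds tendsto_id)
  have hequiv := isEquivalent_one_sub_one_sub_pow
    (hunit.mono fun t ht => ⟨sq_nonneg t, pow_le_one₀ ht.1.le ht.2.le⟩) hsp
  have hpooled : Tendsto (fun t : ℝ => 1 / (⌈1 / t⌉₊ : ℝ) / (2 * t)) (𝓝[>] 0) (𝓝 (1 / 2)) := by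
    convert (hst.const_mul 2).inv₀ (by norm_num) using 2
    · field_simp
    · norm_num
  have hretests : Tendsto (fun t : ℝ => (1 - (1 - t ^ 2) ^ ⌈1 / t⌉₊) / (2 * t))
      (𝓝[>] 0) (𝓝 (1 / 2)) := by
    refine (hequiv.div IsEquivalent.refl).symm.tendsto_nhds ((hst.div_const 2).congr' ?_)
    filter_upwards [hunit] with t ht
    simp only [Pi.div_apply]
    field_simp
  convert hpooled.add hretests using 2
  · simp only [dorfmanCost]
    ring
  · norm_num

/-- The per-item cost of Dorfman's algorithm with group size `⌈1/√p⌉`,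
namely `1/s(p) + 1 - (1-p)^{s(p)}` with `s(p) = ⌈1/√p⌉`, is asymptotically
`2√p` as the prevalence `p` tends to `0` from above. -/
theorem dorfman_cost_asymptotic :
    Filter.Tendsto
      (fun p : ℝ =>
        (1 / (⌈1 / Real.sqrt p⌉₊ : ℝ) + 1 - (1 - p) ^ ⌈1 / Real.sqrt p⌉₊) / (2 * Real.sqrt p))
      (nhdsWithin 0 (Set.Ioi 0)) (nhds 1) := by
  have hsqrt : Tendsto Real.sqrt (𝓝[>] 0) (𝓝[>] 0) :=
    tendsto_nhdsWithin_iff.2 ⟨(continuous_sqrt.tendsto' 0 0 sqrt_zero).mono_left nhdsWithin_le_nhds,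
      eventually_mem_nhdsWithin.mono fun p hp => sqrt_pos.2 hp⟩
  refine (tendsto_dorfmanCost_sq_div.comp hsqrt).congr' ?_
  filter_upwards [self_mem_nhdsWithin] with p (hp : 0 < p)
  simp [dorfmanCost, sq_sqrt hp.le]
end

section
/- For p ∈ (0,1), there exists an integer s ≥ 2 with 1/s + 1 - (1-p)^s < 1 if and only if p < 1 - 3^{-1/3}. In other words, Dorfman's algorithm outperforms individual testing (which uses one test per item) exactly when the prevalence p is below 1 - 1/∛3 ≈ 0.307. -/
lemma cube_le_three_pow (n : ℕ) : n ^ 3 ≤ 3 ^ n := by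
  induction n with
  | zero => norm_num
  | succ k ih =>
    rcases Nat.lt_or_ge k 3 with h | h
    · interval_cases k <;> norm_num
    · calc (k + 1) ^ 3 ≤ 3 * k ^ 3 := by nlinarith [Nat.mul_le_mul_right (k^2) h, Nat.mul_le_mul_right k h]
        _ ≤ 3 * 3 ^ k := by exact Nat.mul_le_mul_left 3 ih
        _ = 3 ^ (k + 1) := by ring

/-- For `p ∈ (0,1)` there is an integer group size `s ≥ 2` for which Dorfman's
algorithm beats individual testing, i.e. `1/s + 1 - (1-p)^s < 1`, if and only if
`p < 1 - 3^{-1/3}`. -/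
theorem dorfman_beats_individual_iff (p : ℝ) (hp : p ∈ Set.Ioo (0 : ℝ) 1) :
    (∃ s : ℕ, 2 ≤ s ∧ 1 / (s : ℝ) + 1 - (1 - p) ^ s < 1) ↔
      p < 1 - (3 : ℝ) ^ (-(1 / 3 : ℝ)) := by
  obtain ⟨hp0, hp1⟩ := hp
  have h3 : (0:ℝ) < (3:ℝ) ^ (-(1/3:ℝ)) := Real.rpow_pos_of_pos (by norm_num) _
  have hcube : ((3:ℝ) ^ (-(1/3:ℝ))) ^ (3:ℕ) = 1/3 := by
    rw [← Real.rpow_natCast ((3:ℝ) ^ (-(1/3:ℝ))) 3, ← Real.rpow_mul (by norm_num)]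
    norm_num
  constructor
  · rintro ⟨s, hs2, hlt⟩
    by_contra hge
    push_neg at hge
    have hq : 1 - p ≤ (3:ℝ) ^ (-(1/3:ℝ)) := by linarith
    have hq0 : (0:ℝ) ≤ 1 - p := by linarith
    have hs0 : (0:ℝ) < (s:ℝ) := by exact_mod_cast Nat.lt_of_lt_of_le (by norm_num) hs2
    have h1 : (1 - p) ^ s ≤ 1 / (s:ℝ) := by
      have e0 : (1 - p) ^ 3 ≤ (1/3:ℝ) := by
        have := pow_le_pow_left₀ hq0 hq 3
        rwa [hcube] at this
      have hnat : (s:ℝ) ^ 3 ≤ (3:ℝ) ^ s := by exact_mod_cast cube_le_three_pow s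
      have hcb : ((1 - p) ^ s) ^ 3 ≤ (1 / (s:ℝ)) ^ 3 := by
        have e1 : ((1 - p) ^ s) ^ 3 = ((1 - p) ^ 3) ^ s := by rw [← pow_mul, ← pow_mul, mul_comm]
        have e2 : ((1 - p) ^ 3) ^ s ≤ (1/3:ℝ) ^ s :=
          pow_le_pow_left₀ (by positivity) e0 s
        have e3 : (1/3:ℝ) ^ s ≤ (1 / (s:ℝ)) ^ 3 := by
          rw [div_pow, div_pow, one_pow, one_pow]
          exact one_div_le_one_div_of_le (by positivity) hnat
        linarith [e1 ▸ e2]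
      exact le_of_pow_le_pow_left₀ (by norm_num) (by positivity) hcb
    linarith
  · intro hlt
    refine ⟨3, by norm_num, ?_⟩
    have hq : (3:ℝ) ^ (-(1/3:ℝ)) < 1 - p := by linarith
    have h : ((3:ℝ) ^ (-(1/3:ℝ))) ^ (3:ℕ) < (1 - p) ^ 3 :=
      pow_lt_pow_left₀ hq (le_of_lt h3) (by norm_num)
    rw [hcube] at h
    push_cast
    linarith
end

section
/- Consider n items, each independently defective with probability p ∈ (0,1), and a random design of T₁ tests in which each item is placed in each test independently with probability π ∈ (0,1), independently of the defectivity. Call an item undiscovered if it is defective or if every test containing it contains at least one defective item. Then the expected number of undiscovered items equals n·[p + (1-p)·Σ_{k=0}^{n-1} C(n-1,k) p^k (1-p)^{n-1-k} (1 - π(1-π)^k)^{T₁}]. Consequently, conservative two-stage testing with this Bernoulli first stage uses T₁ plus this quantity tests in expectation. -/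
/-!
An item is undiscovered iff it is defective, or it is not and every test containing it also
contains a defective item. Fix the defect vector and let `k` be the number of defectives. If item
`i` is not defective, each of the `T₁` independent tests isolates it (contains it and no
defective) with probability `π (1 - π) ^ k`, so `i` stays undiscovered with probability
`(1 - π (1 - π) ^ k) ^ T₁`. Averaged over the defect vector, `i` is defective with probability
`p`, and otherwise `k` counts defectives among the other `n - 1` items, hence is binomial
`(n - 1, p)`. Linearity of expectation sums this over the `n` items.
-/

open MeasureTheory Finset
open scoped NNReal

theorem integral_natCard_subtype_eq_sum_measureReal {Ω ι : Type*} [MeasurableSpace Ω]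
    [DiscreteMeasurableSpace Ω] [Fintype ι] (μ : Measure Ω) [IsFiniteMeasure μ]
    (P : ι → Ω → Prop) :
    ∫ ω, (Nat.card {i // P i ω} : ℝ) ∂μ = ∑ i, μ.real {ω | P i ω} := by
  classical
  have hcount (ω : Ω) : (Nat.card {i // P i ω} : ℝ) = ∑ i, {ω | P i ω}.indicator 1 ω := by
    rw [Nat.card_eq_fintype_card, Fintype.card_subtype, natCast_card_filter]
    simp only [Set.indicator_apply, Set.mem_setOf_eq, Pi.one_apply]
  simp_rw [hcount]
  rw [integral_finset_sum _ fun i _ => (integrable_const 1).indicator .of_discrete]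
  simp_rw [integral_indicator_one .of_discrete]

theorem measureReal_prod_eq_integral {α β : Type*} [MeasurableSpace α] [MeasurableSpace β]
    (μ : Measure α) (ν : Measure β) [IsFiniteMeasure ν] [SFinite μ] {s : Set (α × β)}
    (hs : MeasurableSet s) :
    (μ.prod ν).real s = ∫ a, ν.real (Prod.mk a ⁻¹' s) ∂μ := by
  rw [measureReal_def, Measure.prod_apply hs, ← integral_toReal
    (measurable_measure_prodMk_left hs).aemeasurable (ae_of_all _ fun _ => measure_lt_top _ _)]
  rfl

section Bernoulli

variable {q : ℝ≥0} (hq : q ≤ 1)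

theorem measureReal_bernoulli_singleton (b : Bool) :
    (PMF.bernoulli q hq).toMeasure.real {b} = if b then (q : ℝ) else 1 - q := by
  rw [measureReal_def, PMF.toMeasure_apply_singleton _ _ (measurableSet_singleton b),
    PMF.bernoulli_apply]
  cases b <;> simp [ENNReal.toReal_sub_of_le (ENNReal.coe_le_one_iff.2 hq)]

theorem integral_bernoulli (f : Bool → ℝ) :
    ∫ b, f b ∂(PMF.bernoulli q hq).toMeasure = q * f true + (1 - q) * f false := by
  simp [integral_fintype .of_finite, measureReal_bernoulli_singleton hq]

theorem integral_comp_card_pi_bernoulli {β : Type*} [Fintype β] [DecidableEq β]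
    (h : ℕ → ℝ) :
    ∫ S : β → Bool, h #{j | S j = true} ∂(Measure.pi fun _ => (PMF.bernoulli q hq).toMeasure)
      = ∑ k ∈ range (Fintype.card β + 1),
          (Fintype.card β).choose k * q ^ k * (1 - q) ^ (Fintype.card β - k) * h k := by
  let e : Finset β ≃ (β → Bool) :=
    ⟨fun s j => decide (j ∈ s), fun S => univ.filter fun j => S j = true, fun s => by ext; simp,
      fun S => by ext; simp⟩
  have hweight (s : Finset β) : (Measure.pi fun _ => (PMF.bernoulli q hq).toMeasure).real {e s}
      = q ^ #s * (1 - q) ^ (Fintype.card β - #s) := by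
    rw [measureReal_def, Measure.pi_singleton, ENNReal.toReal_prod]
    simp_rw [← measureReal_def, measureReal_bernoulli_singleton hq]
    simp [e, prod_ite, ← card_compl, filter_notMem_eq_sdiff, compl_eq_univ_sdiff]
  have hcard (s : Finset β) : #{j | e s j = true} = #s := by simp [e]
  rw [integral_fintype .of_finite, ← e.sum_comp]
  simp_rw [hweight, hcard, smul_eq_mul]
  rw [← powerset_univ,
    sum_powerset_apply_card fun k => (q : ℝ) ^ k * (1 - q) ^ (Fintype.card β - k) * h k]
  simp [nsmul_eq_mul, mul_assoc]

theorem integral_ite_comp_card_pi_bernoulli {m : ℕ} (i : Fin (m + 1)) (h : ℕ → ℝ) :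
    ∫ S : Fin (m + 1) → Bool, (if S i = true then 1 else h #{j | S j = true})
        ∂(Measure.pi fun _ => (PMF.bernoulli q hq).toMeasure)
      = q + (1 - q) * ∑ k ∈ range (m + 1), m.choose k * q ^ k * (1 - q) ^ (m - k) * h k := by
  have hcard (S : Fin m → Bool) :
      #{j | (Fin.insertNth i false S : Fin (m + 1) → Bool) j = true} = #{j | S j = true} := by
    simp_rw [card_filter, Fin.sum_univ_succAbove _ i]
    simp
  rw [← (measurePreserving_piFinSuccAbove (fun _ => (PMF.bernoulli q hq).toMeasure) i).symm
      |>.integral_comp', integral_prod _ .of_finite, integral_bernoulli hq]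
  simp [MeasurableEquiv.piFinSuccAbove_symm_apply, hcard, integral_comp_card_pi_bernoulli hq]

variable {ι : Type*} [Fintype ι] [DecidableEq ι]

theorem measureReal_pi_bernoulli_isolating (S : ι → Bool) (i : ι) (hi : S i = false) :
    (Measure.pi fun _ => (PMF.bernoulli q hq).toMeasure).real
        {v | v i = true ∧ ∀ j, S j = true → v j = false}
      = q * (1 - q) ^ #{j | S j = true} := by
  -- coordinates in `{i} ∪ S` are forced (`true` at `i`, `false` on `S`), the others are free
  have hbox : {v : ι → Bool | v i = true ∧ ∀ j, S j = true → v j = false}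
      = Set.univ.pi fun j => {b | (j = i ∨ S j = true) → b = decide (j = i)} := by
    ext v
    simp only [Set.mem_setOf_eq, Set.mem_univ_pi]
    grind
  have hfactor (j : ι) :
      (PMF.bernoulli q hq).toMeasure.real {b | (j = i ∨ S j = true) → b = decide (j = i)}
        = (if j = i then (q : ℝ) else 1) * (if S j = true then 1 - (q : ℝ) else 1) := by
    by_cases hj : j = i
    · subst hj; simp [hi, measureReal_bernoulli_singleton hq]
    · by_cases hSj : S j = true
      · simp [hj, hSj, measureReal_bernoulli_singleton hq]
      · simp [hj, hSj, -Bool.univ_eq]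
  rw [hbox, measureReal_def, Measure.pi_pi, ENNReal.toReal_prod]
  simp only [← measureReal_def, hfactor, prod_mul_distrib, prod_ite_eq', mem_univ, if_true,
    prod_ite, prod_const, one_pow, mul_one]

theorem measureReal_design_undiscovered {κ : Type*} [Fintype κ] (S : ι → Bool) (i : ι) :
    (Measure.pi fun _ : κ => Measure.pi fun _ => (PMF.bernoulli q hq).toMeasure).real
        {M | S i = true ∨ ∀ t, M t i = true → ∃ j, M t j = true ∧ S j = true}
      = if S i = true then 1
        else (1 - (q : ℝ) * (1 - q) ^ #{j | S j = true}) ^ Fintype.card κ := by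
  cases hi : S i
  case true => simp
  case false =>
    have hrow : {v : ι → Bool | v i = true → ∃ j, v j = true ∧ S j = true}
        = {v | v i = true ∧ ∀ j, S j = true → v j = false}ᶜ := by
      ext v
      simp only [Set.mem_setOf_eq, Set.mem_compl_iff]
      grind
    have hdesign :
        {M : κ → ι → Bool | ∀ t, M t i = true → ∃ j, M t j = true ∧ S j = true}
          = Set.univ.pi fun _ => {v | v i = true → ∃ j, v j = true ∧ S j = true} := by
      ext M
      simp
    simp only [Bool.false_eq_true, false_or, if_false]
    rw [hdesign, hrow, measureReal_def, Measure.pi_pi, prod_const, ENNReal.toReal_pow,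
      ← measureReal_def, probReal_compl_eq_one_sub .of_discrete,
      measureReal_pi_bernoulli_isolating hq S i hi, card_univ]

end Bernoulli

theorem measureReal_undiscovered {n T : ℕ} {p r : ℝ≥0} (hp : p ≤ 1) (hr : r ≤ 1)
    (i : Fin n) :
    ((Measure.pi fun _ => (PMF.bernoulli p hp).toMeasure).prod
        (Measure.pi fun _ : Fin T => Measure.pi fun _ => (PMF.bernoulli r hr).toMeasure)).real
        {ω | ω.1 i = true ∨ ∀ t, ω.2 t i = true → ∃ j, ω.2 t j = true ∧ ω.1 j = true}
      = (p : ℝ) + (1 - p) * ∑ k ∈ range n,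
          (n - 1).choose k * (p : ℝ) ^ k * (1 - p) ^ (n - 1 - k) *
            (1 - r * (1 - r) ^ k) ^ T := by
  obtain ⟨m, rfl⟩ := Nat.exists_eq_add_one.mpr i.pos
  rw [measureReal_prod_eq_integral _ _ .of_discrete]
  simp only [Set.preimage_setOf_eq, measureReal_design_undiscovered hr, Fintype.card_fin]
  rw [integral_ite_comp_card_pi_bernoulli hp i fun k => (1 - (r : ℝ) * (1 - r) ^ k) ^ T]
  simp

/-- Conservative two-stage testing with a Bernoulli first stage: `n` items are
independently defective with probability `p` (first coordinate), and each item
is placed in each of `T₁` tests independently with probability `π`, independently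
of defectivity (second coordinate).  An item is *undiscovered* if it is defective
or every test containing it contains at least one defective item.  The expected
number of undiscovered items equals
`n·[p + (1-p)·Σ_{k=0}^{n-1} C(n-1,k) p^k (1-p)^{n-1-k} (1 - π(1-π)^k)^{T₁}]`,
and the expected total number of tests is `T₁` plus this quantity. -/
theorem bernoulli_stage_expected_tests (n T₁ : ℕ) (p π : ℝ)
    (hp : p ∈ Set.Ioo (0 : ℝ) 1) (hπ : π ∈ Set.Ioo (0 : ℝ) 1) :
    (∫ ω : (Fin n → Bool) × (Fin T₁ → Fin n → Bool),
        (Nat.card {i : Fin n // ω.1 i = true ∨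
            ∀ t : Fin T₁, ω.2 t i = true →
              ∃ j : Fin n, ω.2 t j = true ∧ ω.1 j = true} : ℝ)
        ∂(Measure.prod
            (Measure.pi fun _ : Fin n =>
              (PMF.bernoulli (Real.toNNReal p) (Real.toNNReal_le_one.mpr hp.2.le)).toMeasure)
            (Measure.pi fun _ : Fin T₁ => Measure.pi fun _ : Fin n =>
              (PMF.bernoulli (Real.toNNReal π) (Real.toNNReal_le_one.mpr hπ.2.le)).toMeasure)))
      = (n : ℝ) * (p + (1 - p) * ∑ k ∈ Finset.range n,
          (Nat.choose (n - 1) k : ℝ) * p ^ k * (1 - p) ^ (n - 1 - k) *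
            (1 - π * (1 - π) ^ k) ^ T₁) ∧
    (∫ ω : (Fin n → Bool) × (Fin T₁ → Fin n → Bool),
        ((T₁ : ℝ) + (Nat.card {i : Fin n // ω.1 i = true ∨
            ∀ t : Fin T₁, ω.2 t i = true →
              ∃ j : Fin n, ω.2 t j = true ∧ ω.1 j = true} : ℝ))
        ∂(Measure.prod
            (Measure.pi fun _ : Fin n =>
              (PMF.bernoulli (Real.toNNReal p) (Real.toNNReal_le_one.mpr hp.2.le)).toMeasure)
            (Measure.pi fun _ : Fin T₁ => Measure.pi fun _ : Fin n =>
              (PMF.bernoulli (Real.toNNReal π) (Real.toNNReal_le_one.mpr hπ.2.le)).toMeasure)))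
      = (T₁ : ℝ) + (n : ℝ) * (p + (1 - p) * ∑ k ∈ Finset.range n,
          (Nat.choose (n - 1) k : ℝ) * p ^ k * (1 - p) ^ (n - 1 - k) *
            (1 - π * (1 - π) ^ k) ^ T₁) := by
  have hitem (i : Fin n) := measureReal_undiscovered (T := T₁)
    (Real.toNNReal_le_one.mpr hp.2.le) (Real.toNNReal_le_one.mpr hπ.2.le) i
  rw [Real.coe_toNNReal _ hp.1.le, Real.coe_toNNReal _ hπ.1.le] at hitem
  rw [integral_add (integrable_const _) .of_finite, integral_const, probReal_univ, one_smul,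
    integral_natCard_subtype_eq_sum_measureReal]
  simp only [hitem, sum_const, card_univ, Fintype.card_fin, nsmul_eq_mul, and_self]
end

section
/- For p ∈ (0,1), define φ_p(t) = t + p + (1-p)·exp(-t/(e·p)) for t ≥ 0. If 0 < p ≤ 1/(e+1), then the minimum of φ_p over t ≥ 0 equals p·(e·ln((1-p)/p) + 1), attained at t = e·p·(ln((1-p)/p) − 1). If 1/(e+1) ≤ p < 1, then the minimum equals 1, attained at t = 0. -/
/-- For `p ∈ (0,1)` let `φ_p(t) = t + p + (1-p)·exp(-t/(e·p))` for `t ≥ 0`.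
If `p ≤ 1/(e+1)` then the minimum of `φ_p` over `t ≥ 0` is
`p·(e·ln((1-p)/p) + 1)`, attained at `t₀ = e·p·(ln((1-p)/p) - 1)`.
If `p ≥ 1/(e+1)` then the minimum is `1`, attained at `t = 0`. -/
theorem bernoulli_stage_optimal_cost (p : ℝ) (hp : p ∈ Set.Ioo (0 : ℝ) 1) :
    (p ≤ 1 / (Real.exp 1 + 1) →
      (∀ t : ℝ, 0 ≤ t →
        p * (Real.exp 1 * Real.log ((1 - p) / p) + 1) ≤
          t + p + (1 - p) * Real.exp (-t / (Real.exp 1 * p))) ∧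
      0 ≤ Real.exp 1 * p * (Real.log ((1 - p) / p) - 1) ∧
      Real.exp 1 * p * (Real.log ((1 - p) / p) - 1) + p +
          (1 - p) *
            Real.exp (-(Real.exp 1 * p * (Real.log ((1 - p) / p) - 1)) / (Real.exp 1 * p)) =
        p * (Real.exp 1 * Real.log ((1 - p) / p) + 1)) ∧
    (1 / (Real.exp 1 + 1) ≤ p →
      (∀ t : ℝ, 0 ≤ t → 1 ≤ t + p + (1 - p) * Real.exp (-t / (Real.exp 1 * p))) ∧
      (0 : ℝ) + p + (1 - p) * Real.exp (-(0 : ℝ) / (Real.exp 1 * p)) = 1) := by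
  obtain ⟨hp0, hp1⟩ := hp
  set E := Real.exp 1 with hEdef
  have hE : 0 < E := Real.exp_pos 1
  have hEp : 0 < E * p := mul_pos hE hp0
  have h1p : 0 < 1 - p := by linarith
  set L := Real.log ((1 - p) / p) with hLdef
  have hq : 0 < (1 - p) / p := div_pos h1p hp0
  have hexpL : Real.exp L = (1 - p) / p := Real.exp_log hq
  have hexpnegL : Real.exp (-L) = p / (1 - p) := by
    rw [Real.exp_neg, hexpL]
    field_simp
  have hexp1L : Real.exp (1 - L) = E * (p / (1 - p)) := by
    rw [show (1 : ℝ) - L = 1 + (-L) by ring, Real.exp_add, hexpnegL]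
  constructor
  · intro hple
    have hEp1 : (E + 1) * p ≤ 1 := by
      rw [le_div_iff₀ (by positivity)] at hple
      linarith
    have hLe : E ≤ (1 - p) / p := by
      rw [le_div_iff₀ hp0]; nlinarith
    have hL1 : 1 ≤ L := by
      rw [hLdef, Real.le_log_iff_exp_le hq]; exact hLe
    refine ⟨?_, ?_, ?_⟩
    · intro t ht
      set u := -t / (E * p) with hudef
      have hu : E * p * u = -t := by
        rw [hudef]; field_simp
      have hsplit : Real.exp u = Real.exp (1 - L) * Real.exp (u - (1 - L)) := by
        rw [← Real.exp_add]; ring_nf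
      have hlin : 1 + (u - (1 - L)) ≤ Real.exp (u - (1 - L)) :=
        by linarith [Real.add_one_le_exp (u - (1 - L))]
      have hpos : 0 < Real.exp (1 - L) := Real.exp_pos _
      have key : Real.exp (1 - L) * (1 + (u - (1 - L))) ≤ Real.exp u := by
        rw [hsplit]
        exact mul_le_mul_of_nonneg_left hlin (le_of_lt hpos)
      have hcoef : (1 - p) * Real.exp (1 - L) = E * p := by
        rw [hexp1L]; field_simp
      have h5 : (1 - p) * (Real.exp (1 - L) * (1 + (u - (1 - L)))) ≤
          (1 - p) * Real.exp u :=
        mul_le_mul_of_nonneg_left key (le_of_lt h1p)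
      have h6 : (1 - p) * (Real.exp (1 - L) * (1 + (u - (1 - L)))) =
          E * p * (1 + u - 1 + L) := by
        rw [← mul_assoc, hcoef]; ring
      nlinarith [h5, h6, hu]
    · exact mul_nonneg (le_of_lt hEp) (by linarith)
    · have harg : -(E * p * (L - 1)) / (E * p) = 1 - L := by
        field_simp; ring
      rw [harg, hexp1L]
      field_simp
      ring
  · intro hpge
    have hEp1 : 1 ≤ (E + 1) * p := by
      rw [div_le_iff₀ (by positivity)] at hpge
      linarith
    have h1pEp : 1 - p ≤ E * p := by nlinarith
    constructor
    · intro t ht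
      set u := -t / (E * p) with hudef
      have hu : E * p * u = -t := by
        rw [hudef]; field_simp
      have hu0 : u ≤ 0 := by
        rw [hudef]
        exact div_nonpos_of_nonpos_of_nonneg (by linarith) (le_of_lt hEp)
      have hlin : 1 + u ≤ Real.exp u := by linarith [Real.add_one_le_exp u]
      have h5 : (1 - p) * (1 + u) ≤ (1 - p) * Real.exp u :=
        mul_le_mul_of_nonneg_left hlin (le_of_lt h1p)
      nlinarith [mul_le_mul_of_nonpos_right h1pEp hu0]
    · simp
end

section
/- Let H(p) = -p·log₂(p) - (1-p)·log₂(1-p) be the binary entropy. Then H(p) / [p·(e·ln((1-p)/p) + 1)] → 1/(e·ln 2) as p → 0⁺. In other words, conservative two-stage testing with an optimized Bernoulli first stage achieves rate 1/(e ln 2) ≈ 0.531 in the sparse limit. -/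
/-!
Near `0⁺` the entropy and the cost are both dominated by their `-p ln p` term:
`binEntropy p = -p ln p - (1 - p) ln (1 - p)` with `(1 - p) ln (1 - p) = O(p)`, and
`p (e ln ((1 - p) / p) + 1) = e (-p ln p) + e p ln (1 - p) + p` with both trailing terms `o(p ln p)`,
since `|ln p| → ∞`. Hence the rate is asymptotic to `(-p ln p / ln 2) / (e (-p ln p))`.
-/

open Filter Real Topology Asymptotics

lemma one_isLittleO_log_nhdsGT_zero : (fun _ ↦ (1 : ℝ)) =o[𝓝[>] 0] log :=
  isLittleO_one_left_iff ℝ |>.mpr <| tendsto_abs_atBot_atTop.comp tendsto_log_nhdsGT_zero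

lemma id_isLittleO_negMulLog_nhdsGT_zero : (fun p ↦ p) =o[𝓝[>] 0] negMulLog := by
  have h := ((isBigO_refl (fun p : ℝ ↦ p) _).mul_isLittleO one_isLittleO_log_nhdsGT_zero).neg_right
  show (fun p ↦ p) =o[𝓝[>] 0] fun p ↦ -p * log p
  simpa only [mul_one, neg_mul] using h

lemma negMulLog_one_sub_isBigO_id : (fun p ↦ negMulLog (1 - p)) =O[𝓝 0] fun p ↦ p := by
  have h : HasDerivAt (fun p ↦ negMulLog (1 - p)) (-(-log (1 - 0) - 1)) 0 :=
    (hasDerivAt_negMulLog (by norm_num)).comp_const_sub 1 0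
  simpa using h.isBigO_sub

lemma isEquivalent_binEntropy_nhdsGT_zero : binEntropy ~[𝓝[>] 0] negMulLog := by
  rw [binEntropy_eq_negMulLog_add_negMulLog_one_sub']
  exact IsEquivalent.refl.add_isLittleO <|
    (negMulLog_one_sub_isBigO_id.mono nhdsWithin_le_nhds).trans_isLittleO
      id_isLittleO_negMulLog_nhdsGT_zero

lemma mul_log_one_sub_isLittleO_negMulLog_nhdsGT_zero :
    (fun p ↦ p * log (1 - p)) =o[𝓝[>] 0] negMulLog := by
  have hlog : Tendsto (fun p : ℝ ↦ log (1 - p)) (𝓝[>] 0) (𝓝 0) := by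
    have : ContinuousAt (fun p : ℝ ↦ log (1 - p)) 0 := by fun_prop (disch := norm_num)
    simpa using this.tendsto.mono_left nhdsWithin_le_nhds
  have h := (isBigO_refl (fun p : ℝ ↦ p) _).mul_isLittleO (isLittleO_one_iff ℝ |>.mpr hlog)
  simp only [mul_one] at h
  exact h.trans id_isLittleO_negMulLog_nhdsGT_zero

lemma isEquivalent_mul_log_div_add_one_nhdsGT_zero {a : ℝ} (ha : a ≠ 0) :
    (fun p ↦ p * (a * log ((1 - p) / p) + 1)) ~[𝓝[>] 0] fun p ↦ a * negMulLog p := by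
  have h : (fun p ↦ a * negMulLog p) + (fun p ↦ a * (p * log (1 - p)) + p)
      ~[𝓝[>] 0] fun p ↦ a * negMulLog p :=
    IsEquivalent.refl.add_isLittleO <|
      (mul_log_one_sub_isLittleO_negMulLog_nhdsGT_zero.const_mul_left a |>.add
        id_isLittleO_negMulLog_nhdsGT_zero).trans_isBigO (isBigO_self_const_mul ha _ _)
  refine h.congr_left ?_
  filter_upwards [Ioo_mem_nhdsGT (zero_lt_one' ℝ)] with p ⟨hp0, hp1⟩
  rw [Pi.add_apply, log_div (by linarith) hp0.ne', negMulLog]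
  ring

lemma neg_mul_logb_sub_mul_logb_eq_binEntropy_div (p : ℝ) :
    -p * logb 2 p - (1 - p) * logb 2 (1 - p) = binEntropy p / log 2 := by
  rw [binEntropy_eq_negMulLog_add_negMulLog_one_sub, negMulLog, negMulLog, logb, logb]
  ring

/-- With `H(p)` the binary entropy, the rate of conservative two-stage testing
with an optimized Bernoulli first stage, `H(p) / [p·(e·ln((1-p)/p) + 1)]`,
tends to `1/(e·ln 2)` as `p → 0⁺`. -/
theorem bernoulli_stage_rate :
    Filter.Tendsto
      (fun p : ℝ =>
        (-p * Real.logb 2 p - (1 - p) * Real.logb 2 (1 - p)) /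
          (p * (Real.exp 1 * Real.log ((1 - p) / p) + 1)))
      (nhdsWithin 0 (Set.Ioi 0)) (nhds (1 / (Real.exp 1 * Real.log 2))) := by
  simp only [neg_mul_logb_sub_mul_logb_eq_binEntropy_div, div_right_comm _ (log 2)]
  rw [← div_div]
  refine Tendsto.div_const ?_ (log 2)
  have hequiv := isEquivalent_binEntropy_nhdsGT_zero.div
    (isEquivalent_mul_log_div_add_one_nhdsGT_zero (exp_ne_zero 1))
  refine hequiv.symm.tendsto_nhds <| tendsto_const_nhds.congr' ?_
  filter_upwards [Ioo_mem_nhdsGT (zero_lt_one' ℝ)] with p ⟨hp0, hp1⟩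
  have : log p ≠ 0 := (log_neg hp0 hp1).ne
  simp only [Pi.div_apply, negMulLog]
  field_simp
end

section
/- Consider n items of which a fixed set D of k items is defective, and a first stage of T₁ tests arranged in r rounds of T₁/r tests each (with r dividing T₁ and T₁/r ≥ 2): in each round, independently across rounds and across items, each item is placed in one test chosen uniformly at random among the T₁/r tests of that round. Then for a fixed nondefective item i, the probability that in every round the test containing i also contains a defective item equals (1 - (1 - r/T₁)^k)^r. Consequently, the expected total number of tests of conservative two-stage testing with this constant tests-per-item first stage equals T₁ + k + (n-k)·(1 - (1 - r/T₁)^k)^r. -/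
open MeasureTheory ENNReal Finset

/-! In one round, condition on the test `v` that receives `i`: each of the `k` defectives
independently avoids `v` with probability `1 - 1/m`, `m = T₁/r`, and this does not depend on `v`,
so `i` shares its test with a defective with probability `1 - (1 - r/T₁)^k`. The rounds are
independent coordinates of a product measure, which gives the `r`-th power, and linearity of
expectation over the items gives the expected number of retests. -/

section Collision

variable {ι β : Type*} [Fintype ι] [DecidableEq ι] [Fintype β] [MeasurableSpace β]
  [MeasurableSingletonClass β]

lemma pi_setOf_forall_ne_apply (μ : Measure β) [IsProbabilityMeasure μ]
    {D : Finset ι} {i : ι} (hi : i ∉ D) :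
    Measure.pi (fun _ : ι => μ) {f : ι → β | ∀ j ∈ D, f j ≠ f i}
      = ∑ v, μ {v} * μ {v}ᶜ ^ #D := by
  set t : β → ι → Set β := fun v =>
    Function.update (fun j => if j ∈ D then {v}ᶜ else Set.univ) i {v}
  have hunion : {f : ι → β | ∀ j ∈ D, f j ≠ f i} = ⋃ v, Set.univ.pi (t v) := by
    ext f
    simp only [Set.mem_ofPred_eq, Set.mem_iUnion, Set.mem_univ_pi, t]
    constructor
    · intro hf
      refine ⟨f i, fun j => ?_⟩
      by_cases hj : j = i
      · subst hj; simp
      · rw [Function.update_of_ne hj]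
        split_ifs with hjD
        exacts [hf j hjD, trivial]
    · rintro ⟨v, hv⟩ j hjD
      have hfi := hv i
      have hfj := hv j
      rw [Function.update_of_ne (by rintro rfl; exact hi hjD), if_pos hjD] at hfj
      simp only [Function.update_self, Set.mem_singleton_iff] at hfi
      exact hfi ▸ hfj
  have hdisj : Pairwise (Function.onFun Disjoint fun v => Set.univ.pi (t v)) := by
    refine fun v w hvw => Set.disjoint_left.mpr fun f hfv hfw => hvw ?_
    have hv := hfv i (Set.mem_univ i)
    have hw := hfw i (Set.mem_univ i)
    simp only [t, Function.update_self, Set.mem_singleton_iff] at hv hw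
    rw [← hv, ← hw]
  rw [hunion, measure_iUnion hdisj fun v => (Set.toFinite _).measurableSet, tsum_fintype]
  refine Finset.sum_congr rfl fun v _ => ?_
  have hDi : (univ \ {i}) ∩ D = D := inter_eq_right.mpr fun j hj =>
    mem_sdiff.mpr ⟨mem_univ j, notMem_singleton.mpr (by rintro rfl; exact hi hj)⟩
  simp only [Measure.pi_pi, t, Function.apply_update (fun _ => μ),
    prod_update_of_mem (mem_univ i), apply_ite μ, measure_univ, prod_ite_mem, hDi, prod_const]

lemma toMeasure_uniformOfFinset_univ_singleton (h : (univ : Finset β).Nonempty) (v : β) :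
    (PMF.uniformOfFinset univ h).toMeasure {v} = (Fintype.card β : ℝ≥0∞)⁻¹ := by
  simp [PMF.toMeasure_apply_singleton _ _ (measurableSet_singleton v)]

lemma pi_uniformOfFinset_setOf_exists_eq_apply (h : (univ : Finset β).Nonempty)
    {D : Finset ι} {i : ι} (hi : i ∉ D) :
    Measure.pi (fun _ : ι => (PMF.uniformOfFinset univ h).toMeasure)
        {f : ι → β | ∃ j ∈ D, f j = f i}
      = 1 - (1 - (Fintype.card β : ℝ≥0∞)⁻¹) ^ #D := by
  have hcompl : {f : ι → β | ∃ j ∈ D, f j = f i} = {f | ∀ j ∈ D, f j ≠ f i}ᶜ := by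
    ext f; simp
  have : Nonempty β := univ_nonempty_iff.mp h
  have hcard : (Fintype.card β : ℝ≥0∞) ≠ 0 := by simp
  rw [hcompl, prob_compl_eq_one_sub (Set.toFinite _).measurableSet, pi_setOf_forall_ne_apply _ hi]
  simp only [prob_compl_eq_one_sub (measurableSet_singleton _),
    toMeasure_uniformOfFinset_univ_singleton, sum_const, card_univ, nsmul_eq_mul, ← mul_assoc,
    ENNReal.mul_inv_cancel hcard (natCast_ne_top _), one_mul]

end Collision

lemma pi_setOf_forall_mem {κ α : Type*} [Fintype κ] [MeasurableSpace α] (ν : Measure α)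
    [SigmaFinite ν] (S : Set α) :
    Measure.pi (fun _ : κ => ν) {A | ∀ ρ, A ρ ∈ S} = ν S ^ Fintype.card κ := by
  have hbox : {A : κ → α | ∀ ρ, A ρ ∈ S} = Set.univ.pi fun _ => S := by ext; simp
  rw [hbox, Measure.pi_pi, prod_const, card_univ]

lemma integral_natCard_subtype {Ω ι : Type*} [MeasurableSpace Ω] [Fintype ι] (μ : Measure Ω)
    [IsFiniteMeasure μ] (p : ι → Ω → Prop) (hp : ∀ i, MeasurableSet {ω | p i ω}) :
    ∫ ω, (Nat.card {i // p i ω} : ℝ) ∂μ = ∑ i, μ.real {ω | p i ω} := by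
  classical
  have hcount : ∀ ω, (Nat.card {i // p i ω} : ℝ) = ∑ i, {ω | p i ω}.indicator 1 ω := by
    intro ω
    simp [Set.indicator_apply, Nat.card_eq_fintype_card, Fintype.card_subtype]
  simp_rw [hcount]
  rw [integral_finsetSum _ fun i _ => (integrable_const 1).indicator (hp i)]
  exact sum_congr rfl fun i _ => integral_indicator_one (hp i)

lemma toReal_one_sub_one_sub_inv_pow_pow {m : ℕ} (hm : 0 < m) (d r : ℕ) :
    ((1 - (1 - (m : ℝ≥0∞)⁻¹) ^ d) ^ r).toReal = (1 - (1 - (m : ℝ)⁻¹) ^ d) ^ r := by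
  have hinv : (m : ℝ≥0∞)⁻¹ ≤ 1 := ENNReal.inv_le_one.mpr (by exact_mod_cast hm)
  have hpow : (1 - (m : ℝ≥0∞)⁻¹) ^ d ≤ 1 := pow_le_one' tsub_le_self d
  rw [ENNReal.toReal_pow, ENNReal.toReal_sub_of_le hpow one_ne_top, ENNReal.toReal_pow,
    ENNReal.toReal_sub_of_le hinv one_ne_top, ENNReal.toReal_inv, ENNReal.toReal_natCast,
    ENNReal.toReal_one]

lemma toReal_pi_pi_uniformOfFinset_setOf_forall_exists_eq {κ ι β : Type*} [Fintype κ]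
    [Fintype ι] [DecidableEq ι] [Fintype β] [MeasurableSpace β] [MeasurableSingletonClass β]
    (h : (univ : Finset β).Nonempty) {D : Finset ι} {i : ι} (hi : i ∉ D) :
    (Measure.pi (fun _ : κ => Measure.pi fun _ : ι => (PMF.uniformOfFinset univ h).toMeasure)
        {A : κ → ι → β | ∀ ρ, ∃ j ∈ D, A ρ j = A ρ i}).toReal
      = (1 - (1 - (Fintype.card β : ℝ)⁻¹) ^ #D) ^ Fintype.card κ := by
  have hβ : 0 < Fintype.card β := Fintype.card_pos_iff.mpr (univ_nonempty_iff.mp h)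
  rw [← toReal_one_sub_one_sub_inv_pow_pow hβ, ← pi_uniformOfFinset_setOf_exists_eq_apply h hi]
  exact congrArg ENNReal.toReal (pi_setOf_forall_mem (κ := κ)
    (Measure.pi fun _ : ι => (PMF.uniformOfFinset univ h).toMeasure) {f | ∃ j ∈ D, f j = f i})

lemma integral_natCard_mem_or {Ω ι : Type*} [MeasurableSpace Ω] [Fintype ι] [DecidableEq ι]
    (μ : Measure Ω) [IsProbabilityMeasure μ] (D : Finset ι) (Q : ι → Ω → Prop)
    (hQ : ∀ i, MeasurableSet {ω | Q i ω}) {p : ℝ}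
    (hp : ∀ i ∉ D, μ.real {ω | Q i ω} = p) :
    ∫ ω, (Nat.card {i // i ∈ D ∨ Q i ω} : ℝ) ∂μ = #D + (Fintype.card ι - #D) * p := by
  have hD : ∀ i ∈ D, μ.real {ω | i ∈ D ∨ Q i ω} = 1 := fun i hi => by simp [hi]
  have hDc : ∀ i ∈ Dᶜ, μ.real {ω | i ∈ D ∨ Q i ω} = p := fun i hi => by
    rw [mem_compl] at hi
    simpa [hi] using hp i hi
  have hmeas : ∀ i, MeasurableSet {ω | i ∈ D ∨ Q i ω} := fun i => by
    by_cases hi : i ∈ D <;> simp [hi, hQ i]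
  rw [integral_natCard_subtype μ _ hmeas, ← sum_add_sum_compl D,
    sum_congr rfl hD, sum_congr rfl hDc, sum_const, sum_const, card_compl,
    nsmul_eq_mul, nsmul_eq_mul, Nat.cast_sub (card_le_univ D), mul_one]

/-- Constant tests-per-item first stage under the fixed-`k` prior: a fixed set
`D` of `k` of the `n` items is defective, and the `T₁` first-stage tests are
arranged in `r` rounds of `T₁/r` tests each (`r ∣ T₁`, `T₁/r ≥ 2`); in each
round each item is independently placed in one uniformly random test of that
round.  For a fixed nondefective item `i`, the probability that in every round
the test containing `i` also contains a defective item is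
`(1 - (1 - r/T₁)^k)^r`; consequently the expected total number of tests of
conservative two-stage testing (first stage, plus individual retests of every
defective item and of every nondefective item all of whose tests contain a
defective) is `T₁ + k + (n-k)·(1 - (1 - r/T₁)^k)^r`. -/
theorem constant_tests_per_item_expected_tests (n T₁ r k : ℕ)
    (hr : 0 < r) (hdvd : r ∣ T₁) (hm : 2 ≤ T₁ / r)
    (D : Finset (Fin n)) (hD : D.card = k) (i : Fin n) (hi : i ∉ D) :
    ((Measure.pi fun _ : Fin r => Measure.pi fun _ : Fin n =>
        (PMF.uniformOfFinset (Finset.univ : Finset (Fin (T₁ / r)))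
          ⟨⟨0, by omega⟩, Finset.mem_univ _⟩).toMeasure)
      {A : Fin r → Fin n → Fin (T₁ / r) |
        ∀ ρ : Fin r, ∃ j ∈ D, A ρ j = A ρ i}).toReal
      = (1 - (1 - (r : ℝ) / (T₁ : ℝ)) ^ k) ^ r ∧
    (∫ A : Fin r → Fin n → Fin (T₁ / r),
        ((T₁ : ℝ) + (Nat.card {i' : Fin n // i' ∈ D ∨
            ∀ ρ : Fin r, ∃ j ∈ D, A ρ j = A ρ i'} : ℝ))
        ∂(Measure.pi fun _ : Fin r => Measure.pi fun _ : Fin n =>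
            (PMF.uniformOfFinset (Finset.univ : Finset (Fin (T₁ / r)))
              ⟨⟨0, by omega⟩, Finset.mem_univ _⟩).toMeasure))
      = (T₁ : ℝ) + (k : ℝ) + ((n : ℝ) - (k : ℝ)) *
          (1 - (1 - (r : ℝ) / (T₁ : ℝ)) ^ k) ^ r := by
  have hne : (univ : Finset (Fin (T₁ / r))).Nonempty := ⟨⟨0, by omega⟩, mem_univ _⟩
  have hratio : ((T₁ / r : ℕ) : ℝ)⁻¹ = r / T₁ := by
    rw [Nat.cast_div hdvd (by positivity), inv_div]
  have hround : ∀ i' ∉ D,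
      (Measure.pi (fun _ : Fin r => Measure.pi fun _ : Fin n =>
          (PMF.uniformOfFinset (univ : Finset (Fin (T₁ / r))) hne).toMeasure)
        {A : Fin r → Fin n → Fin (T₁ / r) | ∀ ρ, ∃ j ∈ D, A ρ j = A ρ i'}).toReal
      = (1 - (1 - (r : ℝ) / T₁) ^ k) ^ r := fun i' hi' => by
    rw [toReal_pi_pi_uniformOfFinset_setOf_forall_exists_eq hne hi', Fintype.card_fin,
      Fintype.card_fin, hratio, hD]
  refine ⟨hround i hi, ?_⟩
  rw [integral_add (integrable_const _) Integrable.of_finite, integral_const, probReal_univ,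
    one_smul, integral_natCard_mem_or _ D _ (fun _ => (Set.toFinite _).measurableSet) hround,
    hD, Fintype.card_fin, add_assoc]
end

section
/- For p ∈ (0, 1/2), let r(p) = ⌈log₂(1/p)⌉ and define the per-item cost c(p) = (p/ln 2)·r(p) + p + (1-p)·2^{-r(p)} (the per-item cost of a constant tests-per-item first stage with σ = (ln 2)/p items per test and r(p) tests per item, followed by retesting). Let H(p) = -p·log₂(p) - (1-p)·log₂(1-p). Then H(p)/c(p) → ln 2 as p → 0⁺; that is, this scheme achieves rate ln 2 ≈ 0.693 in the sparse limit. -/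
/-! Numerator and denominator are both asymptotic to multiples of `p log₂(1/p)`: the entropy is
`p log₂(1/p) + O(p)`, the first stage costs `(p / ln 2)·⌈log₂(1/p)⌉ ∼ p log₂(1/p) / ln 2`, and the
retesting terms `p + (1 - p)·2^{-r} ≤ 2p` are negligible. -/

open Filter Real Asymptotics Topology

section

variable {b : ℝ}

theorem tendsto_logb_one_div_nhdsGT_zero (hb : 1 < b) :
    Tendsto (fun p : ℝ => logb b (1 / p)) (𝓝[>] 0) atTop := by
  simpa only [one_div, Function.comp_def] using
    (tendsto_logb_atTop hb).comp tendsto_inv_nhdsGT_zero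

theorem isLittleO_mul_logb_one_div (hb : 1 < b) :
    (fun p : ℝ => p) =o[𝓝[>] 0] fun p => p * logb b (1 / p) := by
  have h : (fun _ : ℝ => (1 : ℝ)) =o[𝓝[>] 0] fun p => logb b (1 / p) :=
    (isLittleO_one_left_iff ℝ).2
      (tendsto_norm_atTop_atTop.comp (tendsto_logb_one_div_nhdsGT_zero hb))
  simpa using (isBigO_refl (fun p : ℝ => p) _).mul_isLittleO h

theorem isBigO_one_sub_mul_logb_one_sub :
    (fun p : ℝ => (1 - p) * logb b (1 - p)) =O[𝓝 0] fun p => p := by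
  have hd : DifferentiableAt ℝ (fun p : ℝ => (1 - p) * logb b (1 - p)) 0 := by
    simp only [logb]
    fun_prop (disch := norm_num)
  simpa using hd.isBigO_sub

theorem isEquivalent_entropy_nhdsGT_zero (hb : 1 < b) :
    (fun p : ℝ => -p * logb b p - (1 - p) * logb b (1 - p)) ~[𝓝[>] 0]
      fun p => p * logb b (1 / p) := by
  have hsplit : (fun p : ℝ => -p * logb b p - (1 - p) * logb b (1 - p)) =
      (fun p => p * logb b (1 / p)) + fun p => -((1 - p) * logb b (1 - p)) := by
    ext p
    simp only [one_div, logb_inv, Pi.add_apply]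
    ring
  rw [hsplit]
  exact IsEquivalent.refl.add_isLittleO <|
    (isBigO_one_sub_mul_logb_one_sub.mono nhdsWithin_le_nhds).neg_left.trans_isLittleO
      (isLittleO_mul_logb_one_div hb)

theorem inv_pow_natCeil_logb_one_div_le (hb : 1 < b) {p : ℝ} (hp : 0 < p) :
    (b ^ ⌈logb b (1 / p)⌉₊)⁻¹ ≤ p := by
  rw [inv_le_comm₀ (by positivity) hp, ← one_div, ← rpow_natCast]
  calc 1 / p = b ^ logb b (1 / p) := (rpow_logb (by linarith) hb.ne' (by positivity)).symm
    _ ≤ b ^ (⌈logb b (1 / p)⌉₊ : ℝ) := rpow_le_rpow_of_exponent_le hb.le (Nat.le_ceil _)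

theorem isEquivalent_cost_nhdsGT_zero (hb : 1 < b) :
    (fun p : ℝ => p / log b * (⌈logb b (1 / p)⌉₊ : ℝ) + p +
        (1 - p) * (b ^ ⌈logb b (1 / p)⌉₊)⁻¹) ~[𝓝[>] 0]
      fun p => p * logb b (1 / p) / log b := by
  have hceil : (fun p : ℝ => (⌈logb b (1 / p)⌉₊ : ℝ)) ~[𝓝[>] 0] fun p => logb b (1 / p) :=
    isEquivalent_nat_ceil.comp_tendsto (tendsto_logb_one_div_nhdsGT_zero hb)
  have hmain : (fun p : ℝ => p / log b * (⌈logb b (1 / p)⌉₊ : ℝ)) ~[𝓝[>] 0]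
      fun p => p * logb b (1 / p) / log b :=
    (IsEquivalent.refl.mul hceil).congr_right
      (.of_forall fun p => by simp only [Pi.mul_apply]; ring)
  have hrest : (fun p : ℝ => p + (1 - p) * (b ^ ⌈logb b (1 / p)⌉₊)⁻¹) =O[𝓝[>] 0]
      fun p => p := by
    refine IsBigO.of_bound 2 ?_
    filter_upwards [Ioo_mem_nhdsGT one_pos] with p ⟨hp0, hp1⟩
    have hpow := inv_pow_natCeil_logb_one_div_le hb hp0
    have hpos : 0 ≤ (b ^ ⌈logb b (1 / p)⌉₊)⁻¹ := by positivity
    rw [Real.norm_of_nonneg (by nlinarith), Real.norm_of_nonneg hp0.le]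
    nlinarith
  have hsmall : (fun p : ℝ => p) =o[𝓝[>] 0] fun p => p * logb b (1 / p) / log b := by
    simpa only [div_eq_inv_mul] using (isLittleO_const_mul_right_iff
      (inv_ne_zero (log_pos hb).ne')).2 (isLittleO_mul_logb_one_div hb)
  exact (hmain.add_isLittleO (hrest.trans_isLittleO hsmall)).congr_left
    (.of_forall fun p => (add_assoc _ _ _).symm)

end

/-- With `r(p) = ⌈log₂(1/p)⌉` and per-item cost
`c(p) = (p/ln 2)·r(p) + p + (1-p)·2^{-r(p)}` (constant tests-per-item first
stage with `σ = (ln 2)/p`), the rate `H(p)/c(p)` tends to `ln 2` as `p → 0⁺`. -/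
theorem constant_tests_per_item_rate :
    Filter.Tendsto
      (fun p : ℝ =>
        (-p * Real.logb 2 p - (1 - p) * Real.logb 2 (1 - p)) /
          ((p / Real.log 2) * (⌈Real.logb 2 (1 / p)⌉₊ : ℝ) + p +
            (1 - p) * ((2 : ℝ) ^ ⌈Real.logb 2 (1 / p)⌉₊)⁻¹))
      (nhdsWithin 0 (Set.Ioi 0)) (nhds (Real.log 2)) := by
  have hL := tendsto_logb_one_div_nhdsGT_zero one_lt_two
  have hrate :=
    (isEquivalent_entropy_nhdsGT_zero one_lt_two).div (isEquivalent_cost_nhdsGT_zero one_lt_two)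
  refine hrate.symm.tendsto_nhds (tendsto_const_nhds.congr' ?_)
  filter_upwards [self_mem_nhdsWithin, hL.eventually_gt_atTop 0] with p (hp : 0 < p) hLp
  have hlog2 : Real.log 2 ≠ 0 := (log_pos one_lt_two).ne'
  simp only [Pi.div_apply]
  field_simp
end

section
/- Consider n = m·s items of which a fixed set of k items is defective (k ≤ n - s), and a first stage consisting of r independent rounds, each round partitioning the n items uniformly at random into m = n/s tests of size s. For a fixed nondefective item i, the probability that in every round the test containing i contains a defective item equals (1 - C(n-1-k, s-1)/C(n-1, s-1))^r. Consequently, the expected total number of tests of conservative two-stage testing with this doubly constant first stage equals n·r/s + k + (n-k)·(1 - C(n-1-k, s-1)/C(n-1, s-1))^r. -/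
open Finset Function

lemma card_ext {α : Type*} [Fintype α] [DecidableEq α] (S : Finset α)
    (g : {x // x ∈ S} → α) (hg : Function.Injective g) :
    Fintype.card {π : Equiv.Perm α // ∀ x : {x // x ∈ S}, π x = g x}
      = Nat.factorial (Fintype.card α - S.card) := by
  classical
  set s : Set α := ↑S with hs
  let e0 : s ≃ (Set.range g : Set α) := Equiv.ofInjective g hg
  have hcoe : ∀ x : s, (e0 x : α) = g x := fun x => rfl
  have key : {π : Equiv.Perm α // ∀ x : {x // x ∈ S}, π x = g x}
      ≃ ((sᶜ : Set α) ≃ ((Set.range g)ᶜ : Set α)) := by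
    refine (Equiv.subtypeEquivRight ?_).trans (Equiv.Set.compl e0)
    intro π
    constructor
    · intro h x; rw [hcoe]; exact h x
    · intro h x; rw [← hcoe]; exact h x
  rw [Fintype.card_congr key]
  have h1 : Fintype.card (sᶜ : Set α) = Fintype.card α - S.card := by
    rw [Fintype.card_compl_set]
    congr 1
    simp [s]
  have h2 : Fintype.card ((Set.range g)ᶜ : Set α) = Fintype.card α - S.card := by
    rw [Fintype.card_compl_set, Set.card_range_of_injective hg]
    congr 1
    simp [s]
  rw [Fintype.card_equiv (Fintype.equivOfCardEq (h1.trans h2.symm)), h1]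
lemma card_block (n m s : ℕ) (hn : n = m * s) (hs : 0 < s) (p : Fin n) :
    (Finset.univ.filter (fun q : Fin n => (q : ℕ) / s = (p : ℕ) / s)).card = s := by
  classical
  set t := (p : ℕ) / s with ht
  have htm : t < m := by
    rw [ht, Nat.div_lt_iff_lt_mul hs]
    have := p.isLt; omega
  have hub : t * s + s ≤ n := by
    have h : (t + 1) * s ≤ m * s := Nat.mul_le_mul_right s htm
    have h2 : (t + 1) * s = t * s + s := by ring
    omega
  have key : (Finset.univ.filter (fun q : Fin n => (q : ℕ) / s = t)).card
      = (Finset.Ico (t * s) (t * s + s)).card := by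
    refine Finset.card_bij'
      (fun (q : Fin n) (_ : q ∈ Finset.univ.filter (fun q : Fin n => (q : ℕ) / s = t)) => (q : ℕ))
      (fun a ha => (⟨a, by simp only [Finset.mem_Ico] at ha; exact lt_of_lt_of_le ha.2 hub⟩ : Fin n)) ?_ ?_ ?_ ?_
    · intro q hq
      simp only [Finset.mem_filter, Finset.mem_univ, true_and] at hq
      simp only [Finset.mem_Ico]
      constructor
      · calc t * s = (q : ℕ) / s * s := by rw [hq]
          _ ≤ (q : ℕ) := Nat.div_mul_le_self _ _
      · have h2 : (q : ℕ) < (t + 1) * s :=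
          (Nat.div_lt_iff_lt_mul hs).mp (by rw [hq]; exact Nat.lt_succ_self t)
        calc (q : ℕ) < (t + 1) * s := h2
          _ = t * s + s := by ring
    · intro a ha
      simp only [Finset.mem_Ico] at ha
      simp only [Finset.mem_filter, Finset.mem_univ, true_and]
      refine Nat.div_eq_of_lt_le ha.1 ?_
      calc a < t * s + s := ha.2
        _ = Nat.succ t * s := by rw [Nat.succ_mul]
    · intro q hq; exact Fin.ext rfl
    · intro a ha; rfl
  rw [key]; simp
lemma card_avoid (n m s k : ℕ) (hn : n = m * s) (hs : 0 < s)
    (D : Finset (Fin n)) (hD : D.card = k) (i : Fin n) (hi : i ∉ D) :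
    Fintype.card {π : Equiv.Perm (Fin n) // ∀ j ∈ D, (π j : ℕ) / s ≠ (π i : ℕ) / s}
      = n * Nat.descFactorial (n - s) k * Nat.factorial (n - 1 - k) := by
  classical
  rw [Fintype.card_subtype]
  rw [Finset.card_eq_sum_card_fiberwise
    (f := fun π : Equiv.Perm (Fin n) => π i) (t := Finset.univ) (fun _ _ => mem_univ _)]
  have hfiber : ∀ p : Fin n,
      ((Finset.univ.filter (fun π : Equiv.Perm (Fin n) =>
        ∀ j ∈ D, (π j : ℕ) / s ≠ (π i : ℕ) / s)).filter
          (fun π => π i = p)).card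
      = Nat.descFactorial (n - s) k * Nat.factorial (n - 1 - k) := by
    intro p
    have step : (Finset.univ.filter (fun π : Equiv.Perm (Fin n) =>
        ∀ j ∈ D, (π j : ℕ) / s ≠ (π i : ℕ) / s)).filter (fun π => π i = p)
        = Finset.univ.filter (fun π : Equiv.Perm (Fin n) =>
            π i = p ∧ ∀ j ∈ D, (π j : ℕ) / s ≠ (p : ℕ) / s) := by
      ext π
      simp only [Finset.mem_filter, Finset.mem_univ, true_and]
      constructor
      · rintro ⟨h1, h2⟩; exact ⟨h2, fun j hj => by rw [← h2]; exact h1 j hj⟩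
      · rintro ⟨h1, h2⟩; exact ⟨fun j hj => by rw [h1]; exact h2 j hj, h1⟩
    rw [step]
    set G := Finset.univ.filter (fun π : Equiv.Perm (Fin n) =>
        π i = p ∧ ∀ j ∈ D, (π j : ℕ) / s ≠ (p : ℕ) / s) with hG
    rw [Finset.card_eq_sum_card_fiberwise
      (f := fun π : Equiv.Perm (Fin n) => (fun j : {x // x ∈ D} => π j))
      (t := Finset.univ) (fun _ _ => mem_univ _)]
    have hterm : ∀ f : {x // x ∈ D} → Fin n,
        (G.filter (fun π => (fun j : {x // x ∈ D} => π j) = f)).card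
        = if (Function.Injective f ∧ ∀ j : {x // x ∈ D}, ((f j : ℕ) / s ≠ (p : ℕ) / s))
            then Nat.factorial (n - 1 - k) else 0 := by
      intro f
      by_cases hf : Function.Injective f ∧ ∀ j : {x // x ∈ D}, ((f j : ℕ) / s ≠ (p : ℕ) / s)
      · rw [if_pos hf]
        obtain ⟨hfinj, hfavoid⟩ := hf
        set S : Finset (Fin n) := insert i D with hS
        have hgdef : ∀ x : {x // x ∈ S}, (x : Fin n) = i ∨ (x : Fin n) ∈ D := by
          intro x
          exact Finset.mem_insert.mp x.2
        set g : {x // x ∈ S} → Fin n := fun x =>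
          if h : (x : Fin n) = i then p else f ⟨x, by
            rcases hgdef x with h' | h'
            · exact absurd h' h
            · exact h'⟩ with hg
        have hgi : ∀ (x : {x // x ∈ S}) (_ : (x : Fin n) = i), g x = p :=
          fun x h => dif_pos h
        have hgD : ∀ (x : {x // x ∈ S}) (h : ¬(x : Fin n) = i) (hm : (x : Fin n) ∈ D),
            g x = f ⟨x, hm⟩ := fun x h hm => dif_neg h
        have hginj : Function.Injective g := by
          intro x y hxy
          by_cases hx : (x : Fin n) = i <;> by_cases hy' : (y : Fin n) = i
          · apply Subtype.ext; rw [hx, hy']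
          · rcases hgdef y with h' | h'
            · exact absurd h' hy'
            rw [hgi x hx, hgD y hy' h'] at hxy
            exact absurd (congrArg (fun q : Fin n => (q : ℕ) / s) hxy.symm) (hfavoid _)
          · rcases hgdef x with h' | h'
            · exact absurd h' hx
            rw [hgi y hy', hgD x hx h'] at hxy
            exact absurd (congrArg (fun q : Fin n => (q : ℕ) / s) hxy) (hfavoid _)
          · rcases hgdef x with h1 | h1
            · exact absurd h1 hx
            rcases hgdef y with h2 | h2
            · exact absurd h2 hy'
            rw [hgD x hx h1, hgD y hy' h2] at hxy
            have h3 := hfinj hxy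
            exact Subtype.ext (congrArg (Subtype.val : {x // x ∈ D} → Fin n) h3)
        have hset : G.filter (fun π => (fun j : {x // x ∈ D} => π j) = f)
            = Finset.univ.filter (fun π : Equiv.Perm (Fin n) =>
                ∀ x : {x // x ∈ S}, π x = g x) := by
          ext π
          simp only [hG, Finset.mem_filter, Finset.mem_univ, true_and]
          constructor
          · rintro ⟨⟨hip, _⟩, hres⟩ x
            by_cases hx : (x : Fin n) = i
            · rw [hgi x hx, hx, hip]
            · rcases hgdef x with h' | h'
              · exact absurd h' hx
              rw [hgD x hx h']
              exact congrFun hres ⟨x, h'⟩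
          · intro h
            have hip : π i = p := by
              have h2 := h ⟨i, Finset.mem_insert_self _ _⟩
              rwa [hgi _ rfl] at h2
            have hres : ∀ j : {x // x ∈ D}, π j = f j := by
              intro j
              have hji : (j : Fin n) ≠ i := fun hc => hi (hc ▸ j.2)
              have h2 := h ⟨j, Finset.mem_insert_of_mem j.2⟩
              rwa [hgD _ hji j.2] at h2
            refine ⟨⟨hip, fun j hj => ?_⟩, funext hres⟩
            rw [hres ⟨j, hj⟩]
            exact hfavoid ⟨j, hj⟩
        rw [hset, ← Fintype.card_subtype, card_ext S g hginj]
        congr 1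
        rw [hS, Finset.card_insert_of_notMem hi, hD, Fintype.card_fin]
        omega
      · rw [if_neg hf]
        rw [Finset.card_eq_zero, Finset.filter_eq_empty_iff]
        intro π hπ
        rw [hG, Finset.mem_filter] at hπ
        obtain ⟨_, hip, havoid⟩ := hπ
        intro hres
        apply hf
        constructor
        · intro x y hxy
          apply Subtype.ext
          apply π.injective
          rw [← congrFun hres x, ← congrFun hres y] at hxy
          exact hxy
        · intro j
          rw [← congrFun hres j]
          exact havoid j j.2
    rw [Finset.sum_congr rfl (fun f _ => hterm f), ← Finset.sum_filter,
      Finset.sum_const, smul_eq_mul]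
    have hcard : (Finset.univ.filter (fun f : {x // x ∈ D} → Fin n =>
        Function.Injective f ∧ ∀ j : {x // x ∈ D}, ((f j : ℕ) / s ≠ (p : ℕ) / s))).card
        = Nat.descFactorial (n - s) k := by
      rw [← Fintype.card_subtype]
      have e : {f : {x // x ∈ D} → Fin n //
          Function.Injective f ∧ ∀ j : {x // x ∈ D}, ((f j : ℕ) / s ≠ (p : ℕ) / s)}
          ≃ ({x // x ∈ D} ↪ {q : Fin n // ¬ ((q : ℕ) / s = (p : ℕ) / s)}) :=
        { toFun := fun F => ⟨fun j => ⟨F.1 j, F.2.2 j⟩, fun a b hab =>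
            F.2.1 (congrArg Subtype.val hab)⟩
          invFun := fun e => ⟨fun j => (e j : Fin n),
            ⟨fun a b hab => e.injective (Subtype.ext hab), fun j => (e j).2⟩⟩
          left_inv := fun F => rfl
          right_inv := fun e => rfl }
      rw [Fintype.card_congr e, Fintype.card_embedding_eq]
      have c1 : Fintype.card {x // x ∈ D} = k := by rw [Fintype.card_coe, hD]
      have c2 : Fintype.card {q : Fin n // ¬ ((q : ℕ) / s = (p : ℕ) / s)} = n - s := by
        rw [Fintype.card_subtype_compl, Fintype.card_fin, Fintype.card_subtype,
          card_block n m s hn hs p]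
      rw [c1, c2]
    rw [hcard]
  rw [Finset.sum_congr rfl (fun p _ => hfiber p),
    Finset.sum_const, Finset.card_univ, Fintype.card_fin, smul_eq_mul, mul_assoc]

lemma fact_id (n s k : ℕ) (hs : 1 ≤ s) (hsn : s ≤ n) (hk : k ≤ n - s) :
    Nat.descFactorial (n - s) k * Nat.factorial (n - 1 - k) * Nat.choose (n - 1) (s - 1)
      = Nat.factorial (n - 1) * Nat.choose (n - 1 - k) (s - 1) := by
  have h1 : Nat.factorial (n - s - k) * Nat.descFactorial (n - s) k = Nat.factorial (n - s) :=
    Nat.factorial_mul_descFactorial hk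
  have h2 : Nat.choose (n - 1) (s - 1) * Nat.factorial (s - 1) * Nat.factorial (n - s)
      = Nat.factorial (n - 1) := by
    have := Nat.choose_mul_factorial_mul_factorial (show s - 1 ≤ n - 1 by omega)
    rwa [show n - 1 - (s - 1) = n - s by omega] at this
  have h3 : Nat.choose (n - 1 - k) (s - 1) * Nat.factorial (s - 1) * Nat.factorial (n - s - k)
      = Nat.factorial (n - 1 - k) := by
    have := Nat.choose_mul_factorial_mul_factorial (show s - 1 ≤ n - 1 - k by omega)
    rwa [show n - 1 - k - (s - 1) = n - s - k by omega] at this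
  apply Nat.eq_of_mul_eq_mul_right
    (show 0 < Nat.factorial (s - 1) * Nat.factorial (n - s - k) from
      Nat.mul_pos (Nat.factorial_pos _) (Nat.factorial_pos _))
  calc Nat.descFactorial (n - s) k * Nat.factorial (n - 1 - k) * Nat.choose (n - 1) (s - 1)
        * (Nat.factorial (s - 1) * Nat.factorial (n - s - k))
      = Nat.factorial (n - 1 - k) * ((Nat.choose (n - 1) (s - 1) * Nat.factorial (s - 1))
          * (Nat.factorial (n - s - k) * Nat.descFactorial (n - s) k)) := by ring
    _ = Nat.factorial (n - 1 - k) * ((Nat.choose (n - 1) (s - 1) * Nat.factorial (s - 1))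
          * Nat.factorial (n - s)) := by rw [h1]
    _ = Nat.factorial (n - 1 - k) * Nat.factorial (n - 1) := by rw [← h2]
    _ = Nat.factorial (n - 1) * (Nat.choose (n - 1 - k) (s - 1) * Nat.factorial (s - 1)
          * Nat.factorial (n - s - k)) := by rw [h3]; ring
    _ = Nat.factorial (n - 1) * Nat.choose (n - 1 - k) (s - 1)
        * (Nat.factorial (s - 1) * Nat.factorial (n - s - k)) := by ring

lemma card_hit_eq (n m s k : ℕ) (hn : n = m * s) (hs : 0 < s)
    (D : Finset (Fin n)) (hD : D.card = k) (i : Fin n) (hi : i ∉ D) :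
    Fintype.card {π : Equiv.Perm (Fin n) // ∃ j ∈ D, (π j : ℕ) / s = (π i : ℕ) / s}
      + n * Nat.descFactorial (n - s) k * Nat.factorial (n - 1 - k)
      = Nat.factorial n := by
  classical
  rw [← card_avoid n m s k hn hs D hD i hi, Fintype.card_subtype, Fintype.card_subtype]
  have hneg : (Finset.univ.filter (fun π : Equiv.Perm (Fin n) =>
      ∀ j ∈ D, (π j : ℕ) / s ≠ (π i : ℕ) / s))
      = Finset.univ.filter (fun π : Equiv.Perm (Fin n) =>
        ¬ ∃ j ∈ D, (π j : ℕ) / s = (π i : ℕ) / s) := by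
    ext π; simp
  rw [hneg, Finset.card_filter_add_card_filter_not, Finset.card_univ,
    Fintype.card_perm, Fintype.card_fin]

lemma card_rounds (n s r : ℕ) (D : Finset (Fin n)) (i : Fin n) :
    Fintype.card {B : Fin r → Equiv.Perm (Fin n) //
        ∀ ρ : Fin r, ∃ j ∈ D, ((B ρ j : ℕ) / s = (B ρ i : ℕ) / s)}
      = (Fintype.card {π : Equiv.Perm (Fin n) //
          ∃ j ∈ D, (π j : ℕ) / s = (π i : ℕ) / s}) ^ r := by
  classical
  rw [Fintype.card_congr (Equiv.subtypePiEquivPi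
    (p := fun (ρ : Fin r) (π : Equiv.Perm (Fin n)) =>
      ∃ j ∈ D, (π j : ℕ) / s = (π i : ℕ) / s)),
    Fintype.card_pi]
  simp

lemma hit_ratio (n m s k : ℕ) (hn : n = m * s) (hm : 0 < m) (hs : 0 < s)
    (hk : k ≤ n - s) (D : Finset (Fin n)) (hD : D.card = k) (i : Fin n) (hi : i ∉ D) :
    ((Fintype.card {π : Equiv.Perm (Fin n) //
        ∃ j ∈ D, (π j : ℕ) / s = (π i : ℕ) / s} : ℕ) : ℝ) / (Nat.factorial n : ℝ)
      = 1 - (Nat.choose (n - 1 - k) (s - 1) : ℝ) / (Nat.choose (n - 1) (s - 1) : ℝ) := by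
  have hsn : s ≤ n := by rw [hn]; exact Nat.le_mul_of_pos_left s hm
  have hA := card_hit_eq n m s k hn hs D hD i hi
  set A := n * Nat.descFactorial (n - s) k * Nat.factorial (n - 1 - k) with hAdef
  have hid : A * Nat.choose (n - 1) (s - 1) = Nat.factorial n * Nat.choose (n - 1 - k) (s - 1) := by
    have h := fact_id n s k hs hsn hk
    calc A * Nat.choose (n - 1) (s - 1)
        = n * (Nat.descFactorial (n - s) k * Nat.factorial (n - 1 - k)
            * Nat.choose (n - 1) (s - 1)) := by rw [hAdef]; ring
      _ = n * (Nat.factorial (n - 1) * Nat.choose (n - 1 - k) (s - 1)) := by rw [h]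
      _ = (n * Nat.factorial (n - 1)) * Nat.choose (n - 1 - k) (s - 1) := by ring
      _ = Nat.factorial n * Nat.choose (n - 1 - k) (s - 1) := by
          rw [Nat.mul_factorial_pred (by omega)]
  have hC1 : (0 : ℝ) < (Nat.choose (n - 1) (s - 1) : ℝ) := by
    exact_mod_cast Nat.choose_pos (by omega)
  have hF : (0 : ℝ) < (Nat.factorial n : ℝ) := by exact_mod_cast Nat.factorial_pos n
  have hcast : (Fintype.card {π : Equiv.Perm (Fin n) //
      ∃ j ∈ D, (π j : ℕ) / s = (π i : ℕ) / s} : ℝ) = (Nat.factorial n : ℝ) - (A : ℝ) := by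
    have := congrArg (fun x : ℕ => (x : ℝ)) hA
    push_cast at this
    linarith
  rw [hcast]
  have hid' : (A : ℝ) * (Nat.choose (n - 1) (s - 1) : ℝ)
      = (Nat.factorial n : ℝ) * (Nat.choose (n - 1 - k) (s - 1) : ℝ) := by
    exact_mod_cast congrArg (fun x : ℕ => (x : ℝ)) hid
  field_simp
  nlinarith [hid']

/-- Doubly constant first stage under the fixed-`k` prior: `n = m·s` items, a
fixed defective set `D` of size `k ≤ n - s`, and `r` independent rounds, each
partitioning the items uniformly at random into `m = n/s` tests of size `s`
(round `ρ` is modelled by a uniformly random permutation `B ρ`, item `j` lying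
in test `⌊B ρ j / s⌋`).  For a fixed nondefective item `i`, the probability that
in every round the test containing `i` contains a defective item is
`(1 - C(n-1-k, s-1)/C(n-1, s-1))^r`; consequently the expected total number of
tests of conservative two-stage testing (the `n·r/s = m·r` first-stage tests,
plus individual retests of every defective item and of every nondefective item
all of whose tests contain a defective) is
`n·r/s + k + (n-k)·(1 - C(n-1-k, s-1)/C(n-1, s-1))^r`. -/
theorem doubly_constant_expected_tests (n m s r k : ℕ) (hn : n = m * s)
    (hr : 1 ≤ r) (D : Finset (Fin n)) (hD : D.card = k) (hk : k ≤ n - s)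
    (i : Fin n) (hi : i ∉ D) :
    (Nat.card {B : Fin r → Equiv.Perm (Fin n) //
        ∀ ρ : Fin r, ∃ j ∈ D, ((B ρ j : ℕ) / s = (B ρ i : ℕ) / s)} : ℝ) /
      (Nat.card (Fin r → Equiv.Perm (Fin n)) : ℝ)
      = (1 - (Nat.choose (n - 1 - k) (s - 1) : ℝ) /
            (Nat.choose (n - 1) (s - 1) : ℝ)) ^ r ∧
    (∑ B : Fin r → Equiv.Perm (Fin n),
        (((m * r : ℕ) : ℝ) + (Nat.card {i' : Fin n // i' ∈ D ∨
            ∀ ρ : Fin r, ∃ j ∈ D, ((B ρ j : ℕ) / s = (B ρ i' : ℕ) / s)} : ℝ))) /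
      (Nat.card (Fin r → Equiv.Perm (Fin n)) : ℝ)
      = ((m * r : ℕ) : ℝ) + (k : ℝ) + ((n : ℝ) - (k : ℝ)) *
          (1 - (Nat.choose (n - 1 - k) (s - 1) : ℝ) /
              (Nat.choose (n - 1) (s - 1) : ℝ)) ^ r := by
  classical
  have hnpos : 0 < n := i.pos
  have hs : 0 < s := by
    rcases Nat.eq_zero_or_pos s with h | h
    · subst h; rw [Nat.mul_zero] at hn; omega
    · exact h
  have hm : 0 < m := by
    rcases Nat.eq_zero_or_pos m with h | h
    · subst h; rw [Nat.zero_mul] at hn; omega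
    · exact h
  have hkn : k ≤ n := by
    rw [← hD]
    simpa using Finset.card_le_univ D
  -- notation
  set H : ℕ := Fintype.card {π : Equiv.Perm (Fin n) //
      ∃ j ∈ D, (π j : ℕ) / s = (π i : ℕ) / s} with hHdef
  have hden : (Nat.card (Fin r → Equiv.Perm (Fin n)) : ℝ)
      = ((Nat.factorial n : ℝ)) ^ r := by
    rw [Nat.card_eq_fintype_card, Fintype.card_fun, Fintype.card_perm, Fintype.card_fin,
      Fintype.card_fin]
    push_cast
    ring
  have hFne : ((Nat.factorial n : ℝ)) ≠ 0 := by
    have := Nat.factorial_pos n; positivity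
  have hratio := hit_ratio n m s k hn hm hs hk D hD i hi
  constructor
  · rw [Nat.card_eq_fintype_card, card_rounds n s r D i, hden, ← hHdef]
    rw [← hratio]
    push_cast
    rw [div_pow]
  · -- second part
    have hHi' : ∀ i' : Fin n, i' ∉ D →
        Fintype.card {π : Equiv.Perm (Fin n) //
          ∃ j ∈ D, (π j : ℕ) / s = (π i' : ℕ) / s} = H := by
      intro i' hi'
      have h1 := card_hit_eq n m s k hn hs D hD i' hi'
      have h2 := card_hit_eq n m s k hn hs D hD i hi
      omega
    -- the natural number sum
    have hsum : (∑ B : Fin r → Equiv.Perm (Fin n),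
        Nat.card {i' : Fin n // i' ∈ D ∨
          ∀ ρ : Fin r, ∃ j ∈ D, ((B ρ j : ℕ) / s = (B ρ i' : ℕ) / s)})
        = k * (Nat.factorial n) ^ r + (n - k) * H ^ r := by
      have step1 : ∀ B : Fin r → Equiv.Perm (Fin n),
          Nat.card {i' : Fin n // i' ∈ D ∨
            ∀ ρ : Fin r, ∃ j ∈ D, ((B ρ j : ℕ) / s = (B ρ i' : ℕ) / s)}
          = ∑ i' : Fin n, if (i' ∈ D ∨
              ∀ ρ : Fin r, ∃ j ∈ D, ((B ρ j : ℕ) / s = (B ρ i' : ℕ) / s)) then 1 else 0 := by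
        intro B
        rw [Nat.card_eq_fintype_card, Fintype.card_subtype, Finset.card_filter]
      rw [Finset.sum_congr rfl (fun B _ => step1 B), Finset.sum_comm]
      have step2 : ∀ i' : Fin n,
          (∑ B : Fin r → Equiv.Perm (Fin n), if (i' ∈ D ∨
              ∀ ρ : Fin r, ∃ j ∈ D, ((B ρ j : ℕ) / s = (B ρ i' : ℕ) / s)) then 1 else 0)
          = if i' ∈ D then (Nat.factorial n) ^ r else H ^ r := by
        intro i'
        by_cases hmem : i' ∈ D
        · rw [if_pos hmem]
          have : ∀ B : Fin r → Equiv.Perm (Fin n), (if (i' ∈ D ∨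
              ∀ ρ : Fin r, ∃ j ∈ D, ((B ρ j : ℕ) / s = (B ρ i' : ℕ) / s)) then 1 else 0) = 1 :=
            fun B => if_pos (Or.inl hmem)
          rw [Finset.sum_congr rfl (fun B _ => this B), Finset.sum_const, smul_eq_mul, mul_one,
            Finset.card_univ, Fintype.card_fun, Fintype.card_perm, Fintype.card_fin,
            Fintype.card_fin]
        · rw [if_neg hmem]
          have heq : ∀ B : Fin r → Equiv.Perm (Fin n), (i' ∈ D ∨
              ∀ ρ : Fin r, ∃ j ∈ D, ((B ρ j : ℕ) / s = (B ρ i' : ℕ) / s)) ↔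
              (∀ ρ : Fin r, ∃ j ∈ D, ((B ρ j : ℕ) / s = (B ρ i' : ℕ) / s)) := by
            intro B
            exact ⟨fun h => h.resolve_left hmem, Or.inr⟩
          rw [Finset.sum_congr rfl (fun B _ => by rw [if_congr (heq B) rfl rfl])]
          rw [← Finset.card_filter, ← Fintype.card_subtype, card_rounds n s r D i',
            hHi' i' hmem]
      rw [Finset.sum_congr rfl (fun i' _ => step2 i'), Finset.sum_ite,
        Finset.sum_const, Finset.sum_const, smul_eq_mul, smul_eq_mul]
      have hDfilter : (Finset.univ.filter (fun x : Fin n => x ∈ D)) = D := by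
        ext x; simp
      have hc2 : (Finset.univ.filter (fun x : Fin n => ¬ x ∈ D)).card = n - k := by
        have h3 := Finset.card_filter_add_card_filter_not
          (s := (Finset.univ : Finset (Fin n))) (p := fun x : Fin n => x ∈ D)
        rw [hDfilter, hD, Finset.card_univ, Fintype.card_fin] at h3
        omega
      rw [hDfilter, hD, hc2]
    -- assemble the real computation
    have hsum' : (∑ B : Fin r → Equiv.Perm (Fin n),
        (((m * r : ℕ) : ℝ) + (Nat.card {i' : Fin n // i' ∈ D ∨
            ∀ ρ : Fin r, ∃ j ∈ D, ((B ρ j : ℕ) / s = (B ρ i' : ℕ) / s)} : ℝ)))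
        = ((Nat.factorial n : ℝ)) ^ r * ((m * r : ℕ) : ℝ)
          + ((k * (Nat.factorial n) ^ r + (n - k) * H ^ r : ℕ) : ℝ) := by
      rw [Finset.sum_add_distrib, Finset.sum_const, Finset.card_univ, Fintype.card_fun,
        Fintype.card_perm, Fintype.card_fin, Fintype.card_fin, nsmul_eq_mul]
      congr 1
      · push_cast; ring
      · rw [← hsum]
        push_cast
        rfl
    rw [hsum', hden]
    have hH : (H : ℝ) = (1 - (Nat.choose (n - 1 - k) (s - 1) : ℝ) /
        (Nat.choose (n - 1) (s - 1) : ℝ)) * (Nat.factorial n : ℝ) := by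
      rw [← hratio, ← hHdef]
      field_simp
    have hcast2 : ((k * (Nat.factorial n) ^ r + (n - k) * H ^ r : ℕ) : ℝ)
        = (k : ℝ) * ((Nat.factorial n : ℝ)) ^ r + ((n : ℝ) - (k : ℝ)) * (H : ℝ) ^ r := by
      push_cast [Nat.cast_sub hkn]
      ring
    rw [hcast2, hH, mul_pow]
    have hFpow : ((Nat.factorial n : ℝ)) ^ r ≠ 0 := pow_ne_zero _ hFne
    field_simp
    ring
end

section
/- For all u ∈ (0,1), ln(u)·ln(1-u) ≤ (ln 2)², with equality if and only if u = 1/2. -/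
/-!
Put `f u = log u * log (1 - u)`, which is symmetric under `u ↦ 1 - u`. On `(0, 1/2)` the sign of
`f'(u) = log (1 - u) / u - log u / (1 - u)` is that of `g (1 - u) - g u` with `g t = log t / (1 - t)`.
Up to sign, `g t` is the slope of the secant of `log` through `1` and `t`, so the strict concavity of
`log` makes `g` strictly increasing and `f` strictly increasing on `(0, 1/2]`. Hence `f` attains its
maximum `log (1/2) ^ 2 = (log 2) ^ 2` on `(0, 1)` exactly at `1/2`.
-/

open Real Set

namespace Real

theorem strictMonoOn_log_div_one_sub : StrictMonoOn (fun t => log t / (1 - t)) (Ioi 0 \ {1}) := by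
  rintro x ⟨hx, hx1⟩ y ⟨hy, hy1⟩ hxy
  have := strictConcaveOn_log_Ioi.secant_strict_mono (mem_Ioi.2 one_pos) hx hy hx1 hy1 hxy
  rw [log_one, sub_zero, sub_zero, ← neg_sub 1 y, ← neg_sub 1 x, div_neg, div_neg] at this
  exact neg_lt_neg_iff.1 this

theorem hasDerivAt_log_mul_log_one_sub {x : ℝ} (hx0 : x ≠ 0) (hx1 : x ≠ 1) :
    HasDerivAt (fun u => log u * log (1 - u)) (log (1 - x) / x - log x / (1 - x)) x := by
  have h1x : 1 - x ≠ 0 := sub_ne_zero.2 hx1.symm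
  have : HasDerivAt (fun u => log u * log (1 - u))
      (x⁻¹ * log (1 - x) + log x * ((1 - x)⁻¹ * -1)) x :=
    (hasDerivAt_log hx0).mul ((hasDerivAt_log h1x).comp x ((hasDerivAt_id x).const_sub 1))
  convert this using 1
  field_simp
  ring

theorem strictMonoOn_log_mul_log_one_sub :
    StrictMonoOn (fun u => log u * log (1 - u)) (Ioc 0 (1 / 2)) := by
  refine strictMonoOn_of_deriv_pos (convex_Ioc 0 (1 / 2)) ?_ fun x hx => ?_
  · intro x ⟨hx0, hx2⟩
    exact (hasDerivAt_log_mul_log_one_sub hx0.ne' (by linarith)).continuousAt.continuousWithinAt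
  · rw [interior_Ioc] at hx
    obtain ⟨hx0, hx2⟩ := hx
    have h1x : 0 < 1 - x := by linarith
    rw [(hasDerivAt_log_mul_log_one_sub hx0.ne' (by linarith)).deriv, sub_pos,
      div_lt_div_iff₀ h1x hx0, ← div_lt_div_iff₀ h1x hx0]
    have := strictMonoOn_log_div_one_sub ⟨hx0, (by linarith : x < 1).ne⟩
      ⟨h1x, (by linarith : 1 - x < 1).ne⟩ (show x < 1 - x by linarith)
    simpa only [sub_sub_cancel] using this

theorem log_mul_log_one_sub_half : log (1 / 2) * log (1 - 1 / 2) = log 2 ^ 2 := by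
  rw [show (1 : ℝ) - 1 / 2 = 1 / 2 by norm_num, one_div, log_inv, neg_mul_neg, sq]

theorem log_mul_log_one_sub_lt {u : ℝ} (hu0 : 0 < u) (hu1 : u < 1) (hu : u ≠ 1 / 2) :
    log u * log (1 - u) < log 2 ^ 2 := by
  have half_mem : (1 / 2 : ℝ) ∈ Ioc 0 (1 / 2) := ⟨by norm_num, le_rfl⟩
  rw [← log_mul_log_one_sub_half]
  rcases hu.lt_or_gt with hlt | hgt
  · exact strictMonoOn_log_mul_log_one_sub ⟨hu0, hlt.le⟩ half_mem hlt
  · have := strictMonoOn_log_mul_log_one_sub ⟨sub_pos.2 hu1, by linarith⟩ half_mem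
      (show 1 - u < 1 / 2 by linarith)
    simpa only [sub_sub_cancel, mul_comm (log (1 - u))] using this

end Real

/-- For all `u ∈ (0,1)`, `ln(u)·ln(1-u) ≤ (ln 2)²`, with equality iff `u = 1/2`. -/
theorem log_mul_log_le (u : ℝ) (hu : u ∈ Set.Ioo (0 : ℝ) 1) :
    Real.log u * Real.log (1 - u) ≤ (Real.log 2) ^ 2 ∧
    (Real.log u * Real.log (1 - u) = (Real.log 2) ^ 2 ↔ u = 1 / 2) := by
  rcases eq_or_ne u (1 / 2) with rfl | hne
  · exact ⟨log_mul_log_one_sub_half.le, iff_of_true log_mul_log_one_sub_half rfl⟩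
  · have hlt := log_mul_log_one_sub_lt hu.1 hu.2 hne
    exact ⟨hlt.le, iff_of_false hlt.ne hne⟩
end

section
/- Define g(p) = sup over integers w ≥ 2 of -w·ln(1 - (1-p)^w), for p ∈ (0,1). Then p·g(p) → (ln 2)² as p → 0⁺. -/
/-!
With `u = (1 - p) ^ w`, the bound `p ≤ -log (1 - p)` gives
`p · (-w log (1 - u)) ≤ log u · log (1 - u)`, and `log u · log (1 - u)` is maximal on `(0, 1)`,
with value `(log 2)²`, at `u = 1/2`. Hence `p · g(p) ≤ (log 2)²`. Conversely, for
`w = ⌈log 2 / p⌉` we have `p · w → log 2` and `(1 - p) ^ w → 1/2`, so the term of index `w`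
already tends to `(log 2)²`.
-/

/-- `g p` is the supremum over integers `w ≥ 2` of `-w·ln(1 - (1-p)^w)`,
appearing in the lower bound for conservative two-stage group testing. -/
noncomputable def conservativeBoundG (p : ℝ) : ℝ :=
  ⨆ w : {w : ℕ // 2 ≤ w}, -((w : ℕ) : ℝ) * Real.log (1 - (1 - p) ^ (w : ℕ))

open Real Filter Set Topology

lemma negMulLog_one_sub_le_negMulLog {u : ℝ} (hu0 : 0 ≤ u) (hu : u ≤ 1 / 2) :
    negMulLog (1 - u) ≤ negMulLog u := by
  let d : ℝ → ℝ := fun x ↦ negMulLog x - negMulLog (1 - x)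
  have hd : ∀ x ∈ Ioo (0 : ℝ) (1 / 2),
      HasDerivAt d (-log x - log (1 - x) - 2) x := fun x hx ↦ by
    have h1x : (0 : ℝ) < 1 - x := by linarith [hx.2]
    have h := (hasDerivAt_negMulLog hx.1.ne').sub
      ((hasDerivAt_negMulLog h1x.ne').comp x ((hasDerivAt_id' x).const_sub 1))
    exact h.congr_deriv (by ring)
  have hd' : ∀ x ∈ Ioo (0 : ℝ) (1 / 2),
      HasDerivAt (fun x ↦ -log x - log (1 - x) - 2) ((1 - x)⁻¹ - x⁻¹) x := fun x hx ↦ by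
    have h1x : (0 : ℝ) < 1 - x := by linarith [hx.2]
    have h := (((hasDerivAt_log hx.1.ne').neg).sub
      ((hasDerivAt_log h1x.ne').comp x ((hasDerivAt_id' x).const_sub 1))).sub_const 2
    exact h.congr_deriv (by ring)
  have hconc : ConcaveOn ℝ (Icc 0 (1 / 2)) d := by
    refine concaveOn_of_hasDerivWithinAt2_nonpos (f' := fun x ↦ -log x - log (1 - x) - 2)
      (f'' := fun x ↦ (1 - x)⁻¹ - x⁻¹) (convex_Icc _ _) (by fun_prop)
      (fun x hx ↦ ?_) (fun x hx ↦ ?_) (fun x hx ↦ ?_) <;> simp only [interior_Icc] at hx ⊢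
    · exact (hd x hx).hasDerivWithinAt
    · exact (hd' x hx).hasDerivWithinAt
    · linarith [inv_anti₀ hx.1 (by linarith [hx.2] : x ≤ 1 - x)]
  have := hconc.min_le_of_mem_Icc (left_mem_Icc.2 (by norm_num)) (right_mem_Icc.2 (by norm_num))
    ⟨hu0, hu⟩
  norm_num [d] at this
  linarith

lemma monotoneOn_log_mul_log_one_sub :
    MonotoneOn (fun u ↦ log u * log (1 - u)) (Ioc 0 (1 / 2)) := by
  refine monotoneOn_of_hasDerivWithinAt_nonneg
    (f' := fun u ↦ (negMulLog u - negMulLog (1 - u)) / (u * (1 - u))) (convex_Ioc _ _)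
    (fun u hu ↦ ?_) (fun u hu ↦ ?_) (fun u hu ↦ ?_)
  · have h1u : 1 - u ≠ 0 := by linarith [hu.2]
    exact ((continuousAt_log hu.1.ne').mul
      ((continuousAt_log h1u).comp (by fun_prop))).continuousWithinAt
  · rw [interior_Ioc] at hu
    have h1u : (0 : ℝ) < 1 - u := by linarith [hu.2]
    refine (((hasDerivAt_log hu.1.ne').mul ((hasDerivAt_log h1u.ne').comp u
      ((hasDerivAt_id' u).const_sub 1))).congr_deriv ?_).hasDerivWithinAt
    have hu0 : u ≠ 0 := hu.1.ne'
    simp only [negMulLog, Function.comp_apply]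
    field_simp
    ring
  · rw [interior_Ioc] at hu
    exact div_nonneg (sub_nonneg.2 (negMulLog_one_sub_le_negMulLog hu.1.le hu.2.le))
      (mul_nonneg hu.1.le (by linarith [hu.2]))

lemma log_mul_log_one_sub_le {u : ℝ} (hu0 : 0 < u) (hu1 : u < 1) :
    log u * log (1 - u) ≤ log 2 ^ 2 := by
  have h_half : log (1 / 2) * log (1 - 1 / 2) = log 2 ^ 2 := by
    rw [show (1 : ℝ) - 1 / 2 = 1 / 2 by norm_num, one_div, log_inv]
    ring
  have h_mem : (1 / 2 : ℝ) ∈ Ioc 0 (1 / 2) := ⟨by norm_num, le_rfl⟩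
  rcases le_total u (1 / 2) with hu | hu
  · exact h_half ▸ monotoneOn_log_mul_log_one_sub ⟨hu0, hu⟩ h_mem hu
  · have := monotoneOn_log_mul_log_one_sub ⟨sub_pos.2 hu1, by linarith⟩ h_mem (by linarith)
    dsimp only at this
    rw [sub_sub_cancel, mul_comm] at this
    exact h_half ▸ this

lemma mul_neg_mul_log_one_sub_pow_le {p : ℝ} (hp0 : 0 < p) (hp1 : p < 1) {w : ℕ} (hw : w ≠ 0) :
    p * (-(w : ℝ) * log (1 - (1 - p) ^ w)) ≤ log 2 ^ 2 := by
  set u := (1 - p) ^ w with hu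
  have hu0 : 0 < u := pow_pos (by linarith) w
  have hu1 : u < 1 := pow_lt_one₀ (by linarith) (by linarith) hw
  have hpw : p * w ≤ -log u := by
    rw [hu, log_pow]
    nlinarith [log_le_sub_one_of_pos (by linarith : 0 < 1 - p), (Nat.cast_nonneg w : (0 : ℝ) ≤ w)]
  calc p * (-(w : ℝ) * log (1 - u)) = p * w * -log (1 - u) := by ring
    _ ≤ -log u * -log (1 - u) :=
        mul_le_mul_of_nonneg_right hpw (neg_nonneg.2 (log_nonpos (by linarith) (by linarith)))
    _ = log u * log (1 - u) := neg_mul_neg _ _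
    _ ≤ log 2 ^ 2 := log_mul_log_one_sub_le hu0 hu1

lemma bddAbove_conservativeBoundG_terms {p : ℝ} (hp0 : 0 < p) (hp1 : p < 1) :
    BddAbove (range fun w : {w : ℕ // 2 ≤ w} ↦ -((w : ℕ) : ℝ) * log (1 - (1 - p) ^ (w : ℕ))) := by
  refine ⟨log 2 ^ 2 / p, forall_mem_range.2 fun w ↦ ?_⟩
  rw [le_div_iff₀' hp0]
  exact mul_neg_mul_log_one_sub_pow_le hp0 hp1 (by omega)

lemma mul_conservativeBoundG_le {p : ℝ} (hp0 : 0 < p) (hp1 : p < 1) :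
    p * conservativeBoundG p ≤ log 2 ^ 2 := by
  have : Nonempty {w : ℕ // 2 ≤ w} := ⟨⟨2, le_rfl⟩⟩
  rw [← le_div_iff₀' hp0]
  refine ciSup_le fun w ↦ ?_
  rw [le_div_iff₀' hp0]
  exact mul_neg_mul_log_one_sub_pow_le hp0 hp1 (by omega)

lemma le_conservativeBoundG {p : ℝ} (hp0 : 0 < p) (hp1 : p < 1) {w : ℕ} (hw : 2 ≤ w) :
    -(w : ℝ) * log (1 - (1 - p) ^ w) ≤ conservativeBoundG p :=
  le_ciSup (bddAbove_conservativeBoundG_terms hp0 hp1) ⟨w, hw⟩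

lemma tendsto_mul_natCeil_div {a : ℝ} (ha : 0 ≤ a) :
    Tendsto (fun p : ℝ ↦ p * ⌈a / p⌉₊) (𝓝[>] 0) (𝓝 a) :=
  ((tendsto_nat_ceil_mul_div_atTop ha).comp tendsto_inv_nhdsGT_zero).congr fun p ↦ by
    simp [div_eq_mul_inv, mul_comm]

lemma tendsto_log_one_sub_div : Tendsto (fun p : ℝ ↦ log (1 - p) / p) (𝓝[≠] 0) (𝓝 (-1)) := by
  have h : HasDerivAt (fun p ↦ log (1 - p)) (-1) 0 := by
    simpa using ((hasDerivAt_id' (0 : ℝ)).const_sub 1).log (by norm_num)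
  refine (hasDerivAt_iff_tendsto_slope.1 h).congr fun p ↦ ?_
  simp [slope_def_field]

lemma tendsto_one_sub_pow_natCeil_div {a : ℝ} (ha : 0 ≤ a) :
    Tendsto (fun p : ℝ ↦ (1 - p) ^ ⌈a / p⌉₊) (𝓝[>] 0) (𝓝 (exp (-a))) := by
  have h : Tendsto (fun p : ℝ ↦ p * ⌈a / p⌉₊ * (log (1 - p) / p)) (𝓝[>] 0) (𝓝 (a * -1)) :=
    (tendsto_mul_natCeil_div ha).mul (tendsto_log_one_sub_div.mono_left (nhdsGT_le_nhdsNE 0))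
  rw [mul_neg_one] at h
  refine ((continuous_exp.tendsto _).comp h).congr' ?_
  filter_upwards [Ioo_mem_nhdsGT (zero_lt_one' ℝ)] with p hp
  rw [Function.comp_apply, mul_comm p, mul_assoc, mul_div_cancel₀ _ hp.1.ne', exp_nat_mul,
    exp_log (sub_pos.2 hp.2)]

/-- `p·g(p) → (ln 2)²` as `p → 0⁺`. -/
theorem g_asymptotic :
    Filter.Tendsto (fun p : ℝ => p * conservativeBoundG p)
      (nhdsWithin 0 (Set.Ioi 0)) (nhds ((Real.log 2) ^ 2)) := by
  set w : ℝ → ℕ := fun p ↦ ⌈log 2 / p⌉₊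
  have hlog2 : 0 < log 2 := log_pos one_lt_two
  have h_pow : Tendsto (fun p ↦ (1 - p) ^ w p) (𝓝[>] 0) (𝓝 2⁻¹) := by
    simpa [exp_neg, exp_log] using tendsto_one_sub_pow_natCeil_div hlog2.le
  have h_lower : Tendsto (fun p ↦ p * w p * -log (1 - (1 - p) ^ w p)) (𝓝[>] 0)
      (𝓝 (log 2 ^ 2)) := by
    have := (tendsto_mul_natCeil_div hlog2.le).mul
      ((h_pow.const_sub 1).log (by norm_num)).neg
    rwa [show (1 : ℝ) - 2⁻¹ = 2⁻¹ by norm_num, log_inv, neg_neg, ← sq] at this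
  have h_w : ∀ᶠ p in 𝓝[>] (0 : ℝ), 2 ≤ w p :=
    (tendsto_nat_ceil_atTop.comp
      (tendsto_inv_nhdsGT_zero.const_mul_atTop hlog2)).eventually_ge_atTop 2
  refine tendsto_of_tendsto_of_tendsto_of_le_of_le' h_lower tendsto_const_nhds ?_ ?_
  · filter_upwards [h_w, Ioo_mem_nhdsGT (zero_lt_one' ℝ)] with p hw hp
    rw [mul_assoc, ← neg_mul_comm]
    exact mul_le_mul_of_nonneg_left (le_conservativeBoundG hp.1 hp.2 hw) hp.1.le
  · filter_upwards [Ioo_mem_nhdsGT (zero_lt_one' ℝ)] with p hp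
    exact mul_conservativeBoundG_le hp.1 hp.2
end
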